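/- arXiv:1112.4107 — 8 statements merged into one kernel-verified Lean document; each statement's English description precedes it below -/
import Mathlib

section
/- Let V be a nonzero finite-dimensional complex vector space and let T : V → V be a linear map all of whose eigenvalues have modulus 1. Then for every v ∈ V \ {0} there exists a unique natural number k such that the set of cluster points of the sequence ( (Choose(m,k))⁻¹ · Tᵐ v )_{m ∈ ℕ} is nonempty and contained in E \ {0}, where E is the linear span of the set of all eigenvectors of T and Choose(m,k) denotes the binomial coefficient. -/
/-!
Decompose `v` into generalized eigenvectors `c μ` and let `k` be least with
`(T - μ)^(k+1) c μ = 0` for all `μ`. By the binomial theorem, `T^m c μ` is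
`∑_{j ≤ k} C(m,j) μ^(m-j) (T - μ)^j c μ`, and since `|μ| = 1` and `C(m,j) / C(m,k) → 0` for
`j < k`, the rescaled orbit `C(m,k)⁻¹ T^m v` is asymptotic to `∑ μ^(m-k) w μ` with eigenvectors
`w μ = (T - μ)^k c μ`, not all zero. These sums stay in the compact set of combinations of the
`w μ` with unimodular coefficients, which lies in the span of the eigenvectors and, by
independence of eigenspaces, avoids `0`. For `j < k` the
`k`-rescaled sequence is `C(m,j) / C(m,k) → 0` times the `j`-rescaled one, so any cluster point of
the latter makes `0` a cluster point of the former; this gives uniqueness.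
-/

open Filter Topology Asymptotics

theorem tendsto_choose_div_choose {𝕜 : Type*} [RCLike 𝕜] {j k : ℕ} (h : j < k) :
    Tendsto (fun m : ℕ => (m.choose j : 𝕜) / m.choose k) atTop (𝓝 0) := by
  have hℝ : Tendsto (fun m : ℕ => (m.choose j : ℝ) / m.choose k) atTop (𝓝 0) :=
    ((isTheta_choose j).trans_isLittleO
      (((isLittleO_pow_pow_atTop_of_lt h).comp_tendsto tendsto_natCast_atTop_atTop).trans_isTheta
        (isTheta_choose k).symm)).tendsto_div_nhds_zero
  simpa [Function.comp_def] using (RCLike.continuous_ofReal (K := 𝕜)).tendsto 0 |>.comp hℝ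

section ClusterPt

variable {α X Y : Type*} [TopologicalSpace X] [TopologicalSpace Y] {F : Filter α}

theorem MapClusterPt.prodMk_of_tendsto {f : α → X} {g : α → Y} {x : X} {y : Y}
    (hf : MapClusterPt x F f) (hg : Tendsto g F (𝓝 y)) :
    MapClusterPt (x, y) F fun a => (f a, g a) := by
  obtain ⟨U, hUF, hfU⟩ := mapClusterPt_iff_ultrafilter.1 hf
  exact mapClusterPt_iff_ultrafilter.2 ⟨U, hUF, hfU.prodMk_nhds (hg.mono_left hUF)⟩

theorem MapClusterPt.smul_of_tendsto [SMul Y X] [ContinuousSMul Y X] {f : α → X} {r : α → Y}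
    {x : X} {c : Y} (hf : MapClusterPt x F f) (hr : Tendsto r F (𝓝 c)) :
    MapClusterPt (c • x) F fun a => r a • f a :=
  (hf.prodMk_of_tendsto hr).continuousAt_comp
    (continuous_snd.smul continuous_fst).continuousAt (f := fun q : X × Y => q.2 • q.1)

theorem MapClusterPt.of_tendsto_sub [AddGroup X] [ContinuousAdd X] {f g : α → X} {x : X}
    (hg : MapClusterPt x F g) (h : Tendsto (fun a => f a - g a) F (𝓝 0)) :
    MapClusterPt x F f := by
  simpa [Function.comp_def] using (hg.prodMk_of_tendsto h).continuousAt_comp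
    (continuous_snd.add continuous_fst).continuousAt (f := fun q : X × X => q.2 + q.1)

theorem exists_mapClusterPt_and_subset_of_tendsto_sub [AddGroup X] [IsTopologicalAddGroup X]
    [T2Space X] [F.NeBot] {f g : α → X} {K : Set X} (hK : IsCompact K) (hgK : ∀ a, g a ∈ K)
    (h : Tendsto (fun a => f a - g a) F (𝓝 0)) :
    {p | MapClusterPt p F f}.Nonempty ∧ {p | MapClusterPt p F f} ⊆ K := by
  obtain ⟨p, -, hp⟩ :=
    hK.exists_mapClusterPt (f := F) (tendsto_principal.2 (Eventually.of_forall hgK))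
  refine ⟨⟨p, hp.of_tendsto_sub h⟩, fun q hq => ?_⟩
  have hgf : Tendsto (fun a => g a - f a) F (𝓝 0) := by simpa using h.neg
  exact hK.isClosed.mem_of_mapClusterPt (hq.of_tendsto_sub hgf) (Eventually.of_forall hgK)

end ClusterPt

section ChooseScaling

variable {𝕜 V : Type*} [RCLike 𝕜] [AddCommGroup V] [TopologicalSpace V] [Module 𝕜 V]
  [ContinuousSMul 𝕜 V]

theorem mapClusterPt_zero_choose_inv_smul {x : ℕ → V} {j k : ℕ} (hjk : j < k) {p : V}
    (hp : MapClusterPt p atTop fun m => (m.choose j : 𝕜)⁻¹ • x m) :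
    MapClusterPt 0 atTop fun m => (m.choose k : 𝕜)⁻¹ • x m := by
  have h := hp.smul_of_tendsto (tendsto_choose_div_choose (𝕜 := 𝕜) hjk)
  rw [zero_smul] at h
  refine (EventuallyEq.mapClusterPt_iff ?_).1 h
  filter_upwards [eventually_ge_atTop j] with m hm
  have hj : (m.choose j : 𝕜) ≠ 0 := Nat.cast_ne_zero.2 (Nat.choose_pos hm).ne'
  rw [smul_smul, div_mul_eq_mul_div, mul_inv_cancel₀ hj, one_div]

theorem eq_of_choose_inv_smul_clusterPts {x : ℕ → V} {S : Set V} (hS : (0 : V) ∉ S)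
    {j k : ℕ}
    (hj : {p | MapClusterPt p atTop fun m => (m.choose j : 𝕜)⁻¹ • x m}.Nonempty ∧
      {p | MapClusterPt p atTop fun m => (m.choose j : 𝕜)⁻¹ • x m} ⊆ S)
    (hk : {p | MapClusterPt p atTop fun m => (m.choose k : 𝕜)⁻¹ • x m}.Nonempty ∧
      {p | MapClusterPt p atTop fun m => (m.choose k : 𝕜)⁻¹ • x m} ⊆ S) :
    j = k := by
  rcases lt_trichotomy j k with hjk | hjk | hjk
  · obtain ⟨p, hp⟩ := hj.1
    exact absurd (hk.2 (mapClusterPt_zero_choose_inv_smul hjk hp)) hS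
  · exact hjk
  · obtain ⟨p, hp⟩ := hk.1
    exact absurd (hj.2 (mapClusterPt_zero_choose_inv_smul hjk hp)) hS

end ChooseScaling

namespace Module.End

section CommRing

variable {R V : Type*} [CommRing R] [AddCommGroup V] [Module R V]

theorem pow_apply_eq_sum_choose (T : End R V) (μ : R) {x : V} {k : ℕ}
    (hx : ((T - μ • 1) ^ (k + 1)) x = 0) (m : ℕ) :
    (T ^ m) x =
      ∑ j ∈ Finset.range (k + 1), (m.choose j : R) • μ ^ (m - j) • ((T - μ • 1) ^ j) x := by
  set N := T - μ • 1
  set f : ℕ → V := fun j => (m.choose j : R) • μ ^ (m - j) • (N ^ j) x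
  have hbinom : (T ^ m) x = ∑ j ∈ Finset.range (m + 1), f j := by
    rw [← sub_add_cancel T (μ • 1), ((Commute.one_right N).smul_right μ).add_pow,
      LinearMap.sum_apply]
    refine Finset.sum_congr rfl fun j _ => ?_
    simp [f, N, smul_pow, ← Nat.cast_smul_eq_nsmul R, smul_comm (μ ^ (m - j))]
  have hm : Function.support f ⊆ ↑(Finset.range (m + 1)) := fun j hj => by
    by_contra h
    simp [f, Nat.choose_eq_zero_of_lt (by simpa using h : m < j)] at hj
  have hk : Function.support f ⊆ ↑(Finset.range (k + 1)) := fun j hj => by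
    by_contra h
    simp [f, pow_map_zero_of_le (by simpa using h : k + 1 ≤ j) hx] at hj
  rw [hbinom, ← finsum_eq_sum_of_support_subset f hm, finsum_eq_sum_of_support_subset f hk]

theorem apply_pow_eq_smul_of_pow_succ_apply_eq_zero (T : End R V) (μ : R) {x : V} {k : ℕ}
    (hx : ((T - μ • 1) ^ (k + 1)) x = 0) :
    T (((T - μ • 1) ^ k) x) = μ • ((T - μ • 1) ^ k) x := by
  rwa [pow_succ', mul_apply, LinearMap.sub_apply, LinearMap.smul_apply, one_apply,
    sub_eq_zero] at hx

theorem exists_pow_succ_apply_eq_zero_and_pow_apply_ne_zero {ι : Type*} (N : ι → End R V)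
    (x : ι → V) {n : ℕ} (hn : ∀ i, (N i ^ n) (x i) = 0) (hx : ∃ i, x i ≠ 0) :
    ∃ k, (∀ i, (N i ^ (k + 1)) (x i) = 0) ∧ ∃ i, (N i ^ k) (x i) ≠ 0 := by
  classical
  have hP : ∃ n, ∀ i, (N i ^ n) (x i) = 0 := ⟨n, hn⟩
  obtain ⟨k, hk⟩ : ∃ k, Nat.find hP = k + 1 := by
    refine Nat.exists_eq_succ_of_ne_zero fun h0 => ?_
    obtain ⟨i, hi⟩ := hx
    simpa using hi (by simpa [h0] using Nat.find_spec hP i)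
  refine ⟨k, hk ▸ Nat.find_spec hP, ?_⟩
  by_contra! h
  have := Nat.find_min' hP h
  omega

end CommRing

theorem exists_eq_sum_genEigenvectors {K V : Type*} [Field K] [IsAlgClosed K]
    [AddCommGroup V] [Module K V] [FiniteDimensional K V] (T : End K V) (v : V) :
    ∃ (s : Finset K) (c : K → V),
      (∀ μ ∈ s, T.HasEigenvalue μ ∧ ((T - μ • 1) ^ Module.finrank K V) (c μ) = 0) ∧
      v = ∑ μ ∈ s, c μ := by
  obtain ⟨c, hc, rfl⟩ := (Submodule.mem_iSup_iff_exists_finsupp _ v).1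
    (T.iSup_maxGenEigenspace_eq_top ▸ Submodule.mem_top)
  refine ⟨c.support, c, fun μ hμ => ?_, rfl⟩
  have hgen : c μ ∈ T.genEigenspace μ (Module.finrank K V) :=
    T.maxGenEigenspace_eq_genEigenspace_finrank μ ▸ hc μ
  refine ⟨hasEigenvalue_of_hasGenEigenvalue (k := Module.finrank K V) ?_,
    mem_genEigenspace_nat.1 hgen⟩
  exact (Submodule.ne_bot_iff _).2 ⟨c μ, hgen, Finsupp.mem_support_iff.1 hμ⟩

end Module.End

section Normed

variable {𝕜 V : Type*} [RCLike 𝕜] [NormedAddCommGroup V] [NormedSpace 𝕜 V]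

theorem Module.End.tendsto_choose_inv_smul_pow_apply_sub (T : Module.End 𝕜 V) {μ : 𝕜}
    (hμ : ‖μ‖ = 1) {x : V} {k : ℕ} (hx : ((T - μ • 1) ^ (k + 1)) x = 0) :
    Tendsto (fun m => (m.choose k : 𝕜)⁻¹ • (T ^ m) x - μ ^ (m - k) • ((T - μ • 1) ^ k) x)
      atTop (𝓝 0) := by
  set N := T - μ • 1
  have hterm : ∀ j ∈ Finset.range k, Tendsto
      (fun m => ((m.choose j : 𝕜) / m.choose k) • μ ^ (m - j) • (N ^ j) x) atTop (𝓝 0) := by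
    intro j hj
    have hratio : Tendsto (fun m : ℕ => ‖(m.choose j : 𝕜) / m.choose k‖ * ‖(N ^ j) x‖)
        atTop (𝓝 0) := by
      simpa using (tendsto_choose_div_choose (𝕜 := 𝕜) (Finset.mem_range.1 hj)).norm.mul_const _
    refine squeeze_zero_norm (fun m => le_of_eq ?_) hratio
    rw [norm_smul, norm_smul, norm_pow, hμ, one_pow, one_mul]
  have hsum := tendsto_finsetSum _ hterm
  rw [Finset.sum_const_zero] at hsum
  refine hsum.congr' ?_
  filter_upwards [eventually_ge_atTop k] with m hm
  have hk : (m.choose k : 𝕜) ≠ 0 := Nat.cast_ne_zero.2 (Nat.choose_pos hm).ne'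
  rw [T.pow_apply_eq_sum_choose μ hx m, Finset.sum_range_succ, smul_add,
    smul_smul _ (m.choose k : 𝕜), inv_mul_cancel₀ hk, one_smul, add_sub_cancel_right,
    Finset.smul_sum]
  refine Finset.sum_congr rfl fun j _ => ?_
  rw [div_eq_inv_mul, mul_smul]

variable (𝕜) in
def unimodularCombinations {ι : Type*} [Fintype ι] (w : ι → V) : Set V :=
  (fun a : ι → 𝕜 => ∑ i, a i • w i) '' Set.univ.pi fun _ => Metric.sphere 0 1

variable {ι : Type*} [Fintype ι]

theorem isCompact_unimodularCombinations (w : ι → V) :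
    IsCompact (unimodularCombinations 𝕜 w) :=
  (isCompact_univ_pi fun _ => isCompact_sphere 0 1).image (by fun_prop)

theorem zero_notMem_unimodularCombinations (T : Module.End 𝕜 V) {μ : ι → 𝕜}
    (hμ : Function.Injective μ) {w : ι → V} (hw : ∀ i, T (w i) = μ i • w i)
    (hne : ∃ i, w i ≠ 0) : (0 : V) ∉ unimodularCombinations 𝕜 w := by
  rintro ⟨a, ha, hsum⟩
  have hzero := (iSupIndep_iff_finsetSum_eq_zero_imp_eq_zero _).1
    (T.eigenspaces_iSupIndep.comp hμ) Finset.univ (fun i => a i • w i)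
    (fun i _ => Submodule.smul_mem _ _ (Module.End.mem_eigenspace_iff.2 (hw i))) hsum
  obtain ⟨i, hi⟩ := hne
  have ha_i : a i ≠ 0 :=
    norm_ne_zero_iff.1 ((mem_sphere_zero_iff_norm.1 (ha i trivial)).symm ▸ one_ne_zero)
  exact hi ((smul_eq_zero.1 (hzero i (Finset.mem_univ i))).resolve_left ha_i)

theorem unimodularCombinations_subset_span (T : Module.End 𝕜 V) {μ : ι → 𝕜} {w : ι → V}
    (hw : ∀ i, T (w i) = μ i • w i) :
    unimodularCombinations 𝕜 w ⊆
      Submodule.span 𝕜 {x : V | x ≠ 0 ∧ ∃ μ : 𝕜, T x = μ • x} := by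
  rintro _ ⟨a, -, rfl⟩
  refine Submodule.sum_mem _ fun i _ => Submodule.smul_mem _ _ ?_
  by_cases hi : w i = 0
  · simp [hi]
  · exact Submodule.subset_span ⟨hi, μ i, hw i⟩

end Normed

theorem stmt0_general {V : Type*} [NormedAddCommGroup V] [NormedSpace ℂ V]
    [FiniteDimensional ℂ V]
    (T : V →ₗ[ℂ] V)
    (hT : ∀ μ : ℂ, Module.End.HasEigenvalue (T : Module.End ℂ V) μ → ‖μ‖ = 1)
    (v : V) (hv : v ≠ 0) :
    ∃! k : ℕ,
      {p : V | MapClusterPt p atTop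
          (fun m : ℕ => ((m.choose k : ℂ))⁻¹ • (T ^ m) v)}.Nonempty ∧
      {p : V | MapClusterPt p atTop
          (fun m : ℕ => ((m.choose k : ℂ))⁻¹ • (T ^ m) v)} ⊆
        (Submodule.span ℂ {x : V | x ≠ 0 ∧ ∃ μ : ℂ, T x = μ • x} : Set V) \ {0} := by
  obtain ⟨s, c, hc, rfl⟩ := Module.End.exists_eq_sum_genEigenvectors T v
  rw [← Finset.sum_coe_sort] at hv ⊢
  have hc0 : ∃ μ : s, c μ ≠ 0 := by
    by_contra! h
    simp [h] at hv
  obtain ⟨k, hk, hne⟩ := Module.End.exists_pow_succ_apply_eq_zero_and_pow_apply_ne_zero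
    (fun μ : s => T - (μ : ℂ) • 1) (fun μ => c μ) (fun μ => (hc μ μ.2).2) hc0
  have hμ (μ : s) : ‖(μ : ℂ)‖ = 1 := hT μ (hc μ μ.2).1
  set w := fun μ : s => ((T - (μ : ℂ) • 1) ^ k) (c μ)
  have hw (μ : s) : T (w μ) = μ • w μ :=
    Module.End.apply_pow_eq_smul_of_pow_succ_apply_eq_zero T _ (hk μ)
  have hlim : Tendsto (fun m => (m.choose k : ℂ)⁻¹ • (T ^ m) (∑ μ : s, c μ) -
      ∑ μ : s, (μ : ℂ) ^ (m - k) • w μ) atTop (𝓝 0) := by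
    simpa [map_sum, Finset.smul_sum, ← Finset.sum_sub_distrib] using tendsto_finsetSum _
      fun μ _ => Module.End.tendsto_choose_inv_smul_pow_apply_sub T (hμ μ) (hk μ)
  have hK := exists_mapClusterPt_and_subset_of_tendsto_sub (isCompact_unimodularCombinations w)
    (fun m => ⟨fun μ => (μ : ℂ) ^ (m - k), fun μ _ => by simp [hμ], rfl⟩) hlim
  have hKE : unimodularCombinations ℂ w ⊆
      (Submodule.span ℂ {x : V | x ≠ 0 ∧ ∃ μ : ℂ, T x = μ • x} : Set V) \ {0} :=
    fun y hy => ⟨unimodularCombinations_subset_span T hw hy,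
      fun h0 => zero_notMem_unimodularCombinations T Subtype.val_injective hw hne (h0 ▸ hy)⟩
  exact ⟨k, ⟨hK.1, hK.2.trans hKE⟩,
    fun j hj => eq_of_choose_inv_smul_clusterPts (fun h => h.2 rfl) hj ⟨hK.1, hK.2.trans hKE⟩⟩

/-- Let `V` be a nonzero finite-dimensional complex vector space and
`T : V → V` a linear map all of whose eigenvalues have modulus 1.  Then for every
`v ∈ V \ {0}` there is a unique `k : ℕ` such that the set of cluster points of the
sequence `(Choose(m,k))⁻¹ • Tᵐ v` is nonempty and contained in `E \ {0}`, where `E` is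
the span of the set of all eigenvectors of `T`. -/
theorem stmt0 {V : Type*} [NormedAddCommGroup V] [NormedSpace ℂ V]
    [FiniteDimensional ℂ V] [Nontrivial V]
    (T : V →ₗ[ℂ] V)
    (hT : ∀ μ : ℂ, Module.End.HasEigenvalue (T : Module.End ℂ V) μ → ‖μ‖ = 1)
    (v : V) (hv : v ≠ 0) :
    ∃! k : ℕ,
      {p : V | MapClusterPt p atTop
          (fun m : ℕ => ((m.choose k : ℂ))⁻¹ • (T ^ m) v)}.Nonempty ∧
      {p : V | MapClusterPt p atTop
          (fun m : ℕ => ((m.choose k : ℂ))⁻¹ • (T ^ m) v)} ⊆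
        (Submodule.span ℂ {x : V | x ≠ 0 ∧ ∃ μ : ℂ, T x = μ • x} : Set V) \ {0} :=
  stmt0_general T hT v hv
end

section
/- Let γ̃ ∈ SL(n+1,ℂ) and let γ = [[γ̃]] be the induced projective transformation of ℙⁿ. Then the family of maps { γᵐ : m ∈ ℤ } is equicontinuous at every point of ℙⁿ if and only if γ̃ is diagonalizable and every eigenvalue of γ̃ has modulus 1. -/
open Filter Topology Matrix

noncomputable section

instance (n : ℕ) : TopologicalSpace (Projectivization ℂ (Fin n → ℂ)) :=
  inferInstanceAs (TopologicalSpace (Quotient _))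

/-- The projective transformation `[[A]]` of `ℙⁿ` induced by `A ∈ GL(n+1, ℂ)`,
sending `[v]` to `[A v]`. -/
def projAct {n : ℕ} (A : GL (Fin n) ℂ) :
    Projectivization ℂ (Fin n → ℂ) → Projectivization ℂ (Fin n → ℂ) :=
  Projectivization.map
    (LinearMap.GeneralLinearGroup.toLinearEquiv (Matrix.GeneralLinearGroup.toLin A)).toLinearMap
    (LinearMap.GeneralLinearGroup.toLinearEquiv (Matrix.GeneralLinearGroup.toLin A)).injective

/-- A matrix is diagonalizable if it is conjugate to a diagonal matrix. -/
def IsDiagonalizable {n : ℕ} (A : Matrix (Fin n) (Fin n) ℂ) : Prop :=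
  ∃ (P : GL (Fin n) ℂ) (d : Fin n → ℂ),
    (↑(P⁻¹) : Matrix (Fin n) (Fin n) ℂ) * A * (↑P : Matrix (Fin n) (Fin n) ℂ) =
      Matrix.diagonal d

/-- The standard hermitian inner product on `ℂⁿ`. -/
def herm {n : ℕ} (v w : Fin n → ℂ) : ℂ := ∑ j, starRingEnd ℂ (v j) * w j

/-- The chordal Fubini–Study distance on `ℙⁿ`; it is a metric compatible with the
quotient topology of `ℙⁿ`, and since `ℙⁿ` is compact Hausdorff it induces the unique
uniform structure compatible with that topology. -/
def pdist {n : ℕ} (x y : Projectivization ℂ (Fin n → ℂ)) : ℝ :=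
  Real.sqrt (1 - ‖herm x.rep y.rep‖ ^ 2 /
    ((herm x.rep x.rep).re * (herm y.rep y.rep).re))

/-!
The chordal distance `d([v], [w]) = √(1 - |⟪v, w⟫|² / (‖v‖² ‖w‖²))` is the distance from `w / ‖w‖`
to the line `ℂ v`, so an invertible `T` changes it by a factor at most `‖T‖ ‖T⁻¹‖`. If
`γ̃ = P D P⁻¹` with `D` diagonal and unitary, then `‖γ̃ᵐ‖ ≤ ‖P‖ ‖P⁻¹‖` for all `m : ℤ`, and
equicontinuity follows. Conversely, the powers of `γ̃` fix the class of an eigenvector `v`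
(eigenvalue `λ`), and equicontinuity at `[v]` rules out
* a Jordan chain `γ̃ w = λ w + v`: `γ̃ᵏ⁺¹` maps `[v - λ/(k+1) • w]`, which tends to `[v]`, to `[w]`;
* an eigenvector `w` for an eigenvalue `μ` with `|λ| < |μ|`: `γ̃ᵏ [v + t • w] → [w]` for `t ≠ 0`.
So `γ̃` is diagonalizable and all its eigenvalues have the same modulus, which is `1` since
`det γ̃ = 1`.
-/

open scoped InnerProductSpace

section ChordalDist

variable {𝕜 E F : Type*} [RCLike 𝕜] [NormedAddCommGroup E] [InnerProductSpace 𝕜 E]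
  [NormedAddCommGroup F] [InnerProductSpace 𝕜 F]

variable (𝕜) in
def chordalDist (v w : E) : ℝ :=
  √(1 - ‖⟪v, w⟫_𝕜‖ ^ 2 / (‖v‖ ^ 2 * ‖w‖ ^ 2))

lemma chordalDist_nonneg (v w : E) : 0 ≤ chordalDist 𝕜 v w := Real.sqrt_nonneg _

lemma chordalDist_smul_smul {a b : 𝕜} (ha : a ≠ 0) (hb : b ≠ 0) (v w : E) :
    chordalDist 𝕜 (a • v) (b • w) = chordalDist 𝕜 v w := by
  simp only [chordalDist, inner_smul_left, inner_smul_right, norm_smul, norm_mul,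
    RCLike.norm_conj, mul_pow]
  congr 2
  field_simp

lemma chordalDist_self {v : E} (hv : v ≠ 0) : chordalDist 𝕜 v v = 0 := by
  have : ‖v‖ ≠ 0 := norm_ne_zero_iff.2 hv
  simp [chordalDist, inner_self_eq_norm_sq_to_K, ← pow_mul, ← pow_add, this]

lemma chordalDist_pos {v w : E} (hv : v ≠ 0) (hw : w ∉ 𝕜 ∙ v) : 0 < chordalDist 𝕜 v w := by
  have hw0 : w ≠ 0 := fun h => hw (h ▸ Submodule.zero_mem _)
  have hlt : ‖⟪v, w⟫_𝕜‖ < ‖v‖ * ‖w‖ := by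
    refine (norm_inner_le_norm v w).lt_of_ne fun h => hw ?_
    obtain ⟨r, -, hr⟩ := (norm_inner_eq_norm_iff hv hw0).1 h
    exact Submodule.mem_span_singleton.2 ⟨r, hr.symm⟩
  refine Real.sqrt_pos.2 (sub_pos.2 ((div_lt_one (by positivity)).2 ?_))
  rw [← mul_pow]
  exact pow_lt_pow_left₀ hlt (norm_nonneg _) two_ne_zero

lemma chordalDist_mul_norm (v w : E) :
    chordalDist 𝕜 v w * ‖w‖ = ‖w - (𝕜 ∙ v).starProjection w‖ := by
  set P := (𝕜 ∙ v).starProjection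
  rcases eq_or_ne v 0 with rfl | hv
  · simp [chordalDist, P]
  rcases eq_or_ne w 0 with rfl | hw
  · simp
  have hv' : ‖v‖ ≠ 0 := norm_ne_zero_iff.2 hv
  have hPw : ‖v‖ * ‖P w‖ = ‖⟪v, w⟫_𝕜‖ := by
    have := congrArg norm (Submodule.smul_starProjection_singleton 𝕜 (v := v) w)
    rw [norm_smul, norm_smul, RCLike.norm_ofReal, abs_of_nonneg (by positivity)] at this
    exact mul_left_cancel₀ hv' (by linear_combination this)
  have hpyth : ‖w - P w‖ ^ 2 = ‖w‖ ^ 2 - ‖P w‖ ^ 2 := by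
    have := Submodule.norm_sq_eq_add_norm_sq_starProjection w (𝕜 ∙ v)
    rw [Submodule.starProjection_orthogonal'] at this
    simp only [_root_.sub_apply, one_apply_eq_self] at this
    linarith
  calc chordalDist 𝕜 v w * ‖w‖ = √((1 - ‖⟪v, w⟫_𝕜‖ ^ 2 / (‖v‖ ^ 2 * ‖w‖ ^ 2)) * ‖w‖ ^ 2) := by
        rw [Real.sqrt_mul' _ (by positivity), Real.sqrt_sq (norm_nonneg w), chordalDist]
    _ = √(‖w - P w‖ ^ 2) := by
        rw [hpyth, ← hPw]
        congr 1
        field_simp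
    _ = ‖w - P w‖ := Real.sqrt_sq (norm_nonneg _)

lemma chordalDist_mul_norm_le (v w : E) {u : E} (hu : u ∈ 𝕜 ∙ v) :
    chordalDist 𝕜 v w * ‖w‖ ≤ ‖w - u‖ := by
  rw [chordalDist_mul_norm, Submodule.starProjection_minimal]
  exact ciInf_le ⟨0, by rintro _ ⟨x, rfl⟩; exact norm_nonneg _⟩ (⟨u, hu⟩ : 𝕜 ∙ v)

lemma chordalDist_map_le (T : E →L[𝕜] F) (S : F →L[𝕜] E) (hST : ∀ x, S (T x) = x) (v : E)
    {w : E} (hw : w ≠ 0) : chordalDist 𝕜 (T v) (T w) ≤ ‖T‖ * ‖S‖ * chordalDist 𝕜 v w := by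
  have hTw : 0 < ‖T w‖ := norm_pos_iff.2 fun h => hw (by rw [← hST w, h, map_zero])
  obtain ⟨c, hc⟩ := Submodule.mem_span_singleton.1 ((𝕜 ∙ v).starProjection_apply_mem w)
  refine le_of_mul_le_mul_right ?_ hTw
  calc chordalDist 𝕜 (T v) (T w) * ‖T w‖ ≤ ‖T w - c • T v‖ :=
        chordalDist_mul_norm_le _ _ (Submodule.smul_mem _ c (Submodule.mem_span_singleton_self _))
    _ = ‖T (w - (𝕜 ∙ v).starProjection w)‖ := by rw [← hc, map_sub, map_smul]
    _ ≤ ‖T‖ * (chordalDist 𝕜 v w * ‖w‖) := by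
        rw [chordalDist_mul_norm]; exact T.le_opNorm _
    _ ≤ ‖T‖ * (chordalDist 𝕜 v w * (‖S‖ * ‖T w‖)) := by
        gcongr
        · exact chordalDist_nonneg v w
        · simpa only [hST] using S.le_opNorm (T w)
    _ = ‖T‖ * ‖S‖ * chordalDist 𝕜 v w * ‖T w‖ := by ring

lemma continuousAt_chordalDist {v w : E} (hv : v ≠ 0) (hw : w ≠ 0) :
    ContinuousAt (chordalDist 𝕜 v) w := by
  unfold chordalDist
  fun_prop (disch := positivity)

lemma tendsto_chordalDist_add_smul {v : E} (hv : v ≠ 0) (w : E) :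
    Tendsto (fun s : 𝕜 => chordalDist 𝕜 v (v + s • w)) (𝓝 0) (𝓝 0) := by
  have h := (continuousAt_chordalDist (𝕜 := 𝕜) hv hv).tendsto.comp
    (Continuous.tendsto' (f := fun s : 𝕜 => v + s • w) (by fun_prop) 0 v (by simp))
  rwa [chordalDist_self hv] at h

lemma tendsto_chordalDist_smul_add {v w : E} (hv : v ≠ 0) (hw : w ≠ 0) :
    Tendsto (fun s : 𝕜 => chordalDist 𝕜 v (s • v + w)) (𝓝 0) (𝓝 (chordalDist 𝕜 v w)) :=
  (continuousAt_chordalDist hv hw).tendsto.comp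
    (Continuous.tendsto' (f := fun s : 𝕜 => s • v + w) (by fun_prop) 0 w (by simp))

end ChordalDist

section LinearAlgebra

lemma Matrix.pow_mulVec_of_mulVec_eq_smul {ι R : Type*} [Fintype ι] [DecidableEq ι]
    [CommSemiring R] {A : Matrix ι ι R} {c : R} {v : ι → R} (h : A *ᵥ v = c • v) (k : ℕ) :
    A ^ k *ᵥ v = c ^ k • v := by
  induction k with
  | zero => simp
  | succ k ih =>
    rw [pow_succ', ← Matrix.mulVec_mulVec, ih, Matrix.mulVec_smul, h, smul_smul, pow_succ]

lemma Matrix.pow_succ_mulVec_of_jordanChain {ι R : Type*} [Fintype ι] [DecidableEq ι]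
    [CommSemiring R] {A : Matrix ι ι R} {c : R} {v w : ι → R} (hv : A *ᵥ v = c • v)
    (hw : A *ᵥ w = c • w + v) (k : ℕ) :
    A ^ (k + 1) *ᵥ w = c ^ (k + 1) • w + ((k + 1) * c ^ k) • v := by
  induction k with
  | zero => simpa using hw
  | succ k ih =>
    rw [pow_succ', ← Matrix.mulVec_mulVec, ih, Matrix.mulVec_add, Matrix.mulVec_smul,
      Matrix.mulVec_smul, hv, hw]
    push_cast
    match_scalars <;> ring

lemma Matrix.exists_mulVec_eq_smul_of_mem_spectrum {ι K : Type*} [Fintype ι] [DecidableEq ι]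
    [Field K] {A : Matrix ι ι K} {μ : K} (h : μ ∈ spectrum K A) : ∃ v ≠ 0, A *ᵥ v = μ • v := by
  rw [← Matrix.spectrum_toLin', ← Module.End.hasEigenvalue_iff_mem_spectrum] at h
  obtain ⟨v, hv⟩ := h.exists_hasEigenvector
  exact ⟨v, hv.2, hv.apply_eq_smul⟩

lemma Matrix.eq_one_of_norm_det_eq_one {ι : Type*} [Fintype ι] [DecidableEq ι] [Nonempty ι]
    {A : Matrix ι ι ℂ} (hdet : ‖A.det‖ = 1) {r : ℝ} (hr : ∀ μ ∈ spectrum ℂ A, ‖μ‖ = r) :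
    r = 1 := by
  have hroots : ∀ μ ∈ A.charpoly.roots, ‖μ‖ = r := fun μ hμ =>
    hr μ (Matrix.mem_spectrum_of_isRoot_charpoly (Polynomial.isRoot_of_mem_roots hμ))
  have hcard : A.charpoly.roots.card = Fintype.card ι := by
    rw [IsAlgClosed.card_roots_eq_natDegree, Matrix.charpoly_natDegree_eq_dim]
  obtain ⟨μ, hμ⟩ := Multiset.card_pos_iff_exists_mem.1 (hcard ▸ Fintype.card_pos)
  have hpow : r ^ Fintype.card ι = 1 :=
    calc r ^ Fintype.card ι = (A.charpoly.roots.map fun μ => ‖μ‖).prod := by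
          rw [Multiset.map_congr rfl hroots, Multiset.map_const', Multiset.prod_replicate, hcard]
      _ = ‖A.det‖ := by
          rw [Matrix.det_eq_prod_roots_charpoly]
          exact (map_multiset_prod (normHom : ℂ →*₀ ℝ) _).symm
      _ = 1 := hdet
  exact (pow_eq_one_iff_of_nonneg (hroots μ hμ ▸ norm_nonneg μ) Fintype.card_ne_zero).1 hpow

lemma add_smul_ne_zero_of_notMem_span {K V : Type*} [Field K] [AddCommGroup V] [Module K V]
    {v w : V} (hv : v ≠ 0) (hw : w ∉ K ∙ v) (t : K) :
    v + t • w ≠ 0 := by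
  intro h
  rcases eq_or_ne t 0 with rfl | ht
  · simp_all
  exact hw (Submodule.mem_span_singleton.2 ⟨-t⁻¹, by
    rw [eq_neg_of_add_eq_zero_left h, smul_neg, neg_smul, neg_neg, smul_smul, inv_mul_cancel₀ ht,
      one_smul]⟩)

lemma smul_add_ne_zero_of_notMem_span {K V : Type*} [Field K] [AddCommGroup V] [Module K V]
    {v w : V} (hw : w ∉ K ∙ v) (s : K) :
    s • v + w ≠ 0 := fun h =>
  hw (Submodule.mem_span_singleton.2 ⟨-s, by rw [neg_smul]; exact neg_eq_of_add_eq_zero_right h⟩)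

lemma Module.End.maxGenEigenspace_le_eigenspace {K V : Type*} [Field K] [AddCommGroup V]
    [Module K V] {f : Module.End K V} {μ : K}
    (h : ∀ x, f x - μ • x ∈ f.eigenspace μ → x ∈ f.eigenspace μ) :
    f.maxGenEigenspace μ ≤ f.eigenspace μ := by
  have key : ∀ (k : ℕ) (x : V), ((f - μ • 1) ^ k) x = 0 → x ∈ f.eigenspace μ := by
    intro k
    induction k with
    | zero => simp
    | succ k ih =>
      intro x hx
      refine h x (ih _ ?_)
      rw [pow_succ, Module.End.mul_apply] at hx
      simpa using hx
  intro x hx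
  obtain ⟨k, hk⟩ := (Module.End.mem_maxGenEigenspace f μ x).1 hx
  exact key k x hk

lemma Module.End.iSup_eigenspace_eq_top_of_maxGenEigenspace_le {K V : Type*} [Field K]
    [IsAlgClosed K] [AddCommGroup V] [Module K V] [FiniteDimensional K V] {f : Module.End K V}
    (h : ∀ μ, f.maxGenEigenspace μ ≤ f.eigenspace μ) :
    ⨆ μ, f.eigenspace μ = ⊤ :=
  top_unique <| f.iSup_maxGenEigenspace_eq_top.symm.le.trans (iSup_mono h)

lemma exists_basis_mulVec_eq_smul {N : ℕ} {A : Matrix (Fin N) (Fin N) ℂ}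
    (h : ⨆ μ, Module.End.eigenspace (Matrix.toLin' A) μ = ⊤) :
    ∃ (b : Module.Basis (Fin N) ℂ (Fin N → ℂ)) (d : Fin N → ℂ), ∀ i, A *ᵥ b i = d i • b i := by
  have hint := DirectSum.isInternal_submodule_of_iSupIndep_of_iSup_eq_top
    (Module.End.eigenspaces_iSupIndep (Matrix.toLin' A)) h
  let b := hint.collectedBasis fun μ =>
    Module.Free.chooseBasis ℂ (Module.End.eigenspace (Matrix.toLin' A) μ)
  let e := b.indexEquiv (Pi.basisFun ℂ (Fin N))
  refine ⟨b.reindex e, fun i => (e.symm i).1, fun i => ?_⟩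
  rw [Module.Basis.reindex_apply, ← Matrix.toLin'_apply, ← Module.End.mem_eigenspace_iff,
    hint.collectedBasis_coe]
  exact Submodule.coe_mem _

lemma isDiagonalizable_of_basis {N : ℕ} {A : Matrix (Fin N) (Fin N) ℂ}
    (b : Module.Basis (Fin N) ℂ (Fin N → ℂ)) (d : Fin N → ℂ) (hb : ∀ i, A *ᵥ b i = d i • b i) :
    IsDiagonalizable A := by
  let e := Pi.basisFun ℂ (Fin N)
  let P : GL (Fin N) ℂ :=
    ⟨e.toMatrix b, b.toMatrix e, e.toMatrix_mul_toMatrix_flip b, b.toMatrix_mul_toMatrix_flip e⟩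
  have hAP : A * P = P * Matrix.diagonal d := by
    ext i j
    rw [Matrix.mul_diagonal]
    simpa [P, e, Matrix.mul_apply, Matrix.mulVec, dotProduct, Module.Basis.toMatrix_apply,
      mul_comm] using congrFun (hb j) i
  refine ⟨P, d, ?_⟩
  rw [mul_assoc, hAP, ← mul_assoc, Units.inv_mul, one_mul]

end LinearAlgebra

section ProjectiveSpace

variable {N : ℕ}

open WithLp

lemma herm_eq_inner (v w : Fin N → ℂ) :
    herm v w = ⟪(toLp 2 v : EuclideanSpace ℂ (Fin N)), toLp 2 w⟫_ℂ := by
  simp [herm, PiLp.inner_apply, mul_comm]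

lemma pdist_eq_chordalDist (x y : Projectivization ℂ (Fin N → ℂ)) :
    pdist x y = chordalDist ℂ (toLp 2 x.rep : EuclideanSpace ℂ (Fin N)) (toLp 2 y.rep) := by
  simp only [pdist, chordalDist, herm_eq_inner, inner_self_eq_norm_sq_to_K]
  norm_cast

lemma pdist_mk {v w : Fin N → ℂ} (hv : v ≠ 0) (hw : w ≠ 0) :
    pdist (Projectivization.mk ℂ v hv) (Projectivization.mk ℂ w hw) =
      chordalDist ℂ (toLp 2 v : EuclideanSpace ℂ (Fin N)) (toLp 2 w) := by
  obtain ⟨a, ha⟩ := (Projectivization.mk_eq_mk_iff ℂ _ _ (Projectivization.rep_nonzero _) hv).1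
    (Projectivization.mk_rep _)
  obtain ⟨b, hb⟩ := (Projectivization.mk_eq_mk_iff ℂ _ _ (Projectivization.rep_nonzero _) hw).1
    (Projectivization.mk_rep _)
  rw [pdist_eq_chordalDist, ← ha, ← hb, Units.smul_def, Units.smul_def, toLp_smul, toLp_smul,
    chordalDist_smul_smul a.ne_zero b.ne_zero]

lemma mulVec_ne_zero (g : GL (Fin N) ℂ) {v : Fin N → ℂ} (hv : v ≠ 0) :
    (g : Matrix (Fin N) (Fin N) ℂ) *ᵥ v ≠ 0 := fun h =>
  hv (Matrix.mulVec_injective_of_isUnit g.isUnit (h.trans (Matrix.mulVec_zero _).symm))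

lemma eigenvalue_ne_zero (g : GL (Fin N) ℂ) {c : ℂ} {v : Fin N → ℂ} (hv : v ≠ 0)
    (h : (g : Matrix (Fin N) (Fin N) ℂ) *ᵥ v = c • v) : c ≠ 0 := by
  rintro rfl
  exact mulVec_ne_zero g hv (by rw [h, zero_smul])

lemma projAct_mk (g : GL (Fin N) ℂ) {v : Fin N → ℂ} (hv : v ≠ 0) :
    projAct g (Projectivization.mk ℂ v hv) =
      Projectivization.mk ℂ ((g : Matrix (Fin N) (Fin N) ℂ) *ᵥ v) (mulVec_ne_zero g hv) :=
  Projectivization.map_mk _ _ _ _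

lemma projAct_pow_mk {g : GL (Fin N) ℂ} {k : ℕ} {v u : Fin N → ℂ} (hv : v ≠ 0) (hu : u ≠ 0)
    {c : ℂ} (h : (g : Matrix (Fin N) (Fin N) ℂ) ^ k *ᵥ v = c • u) :
    projAct (g ^ (k : ℤ)) (Projectivization.mk ℂ v hv) = Projectivization.mk ℂ u hu := by
  rw [projAct_mk, Projectivization.mk_eq_mk_iff']
  exact ⟨c, by rw [zpow_natCast, Units.val_pow_eq_pow_val, h]⟩

lemma pdist_mk_pos {v w : Fin N → ℂ} (hv : v ≠ 0) (hw : w ∉ ℂ ∙ v) (hw0 : w ≠ 0) :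
    0 < pdist (Projectivization.mk ℂ v hv) (Projectivization.mk ℂ w hw0) := by
  rw [pdist_mk]
  refine chordalDist_pos (by simpa using hv) fun h => hw ?_
  obtain ⟨a, ha⟩ := Submodule.mem_span_singleton.1 h
  exact Submodule.mem_span_singleton.2 ⟨a, by simpa using congrArg ofLp ha⟩

lemma tendsto_pdist_mk_add_smul {v w : Fin N → ℂ} (hv : v ≠ 0) (hw : w ∉ ℂ ∙ v) :
    Tendsto (fun t : ℂ => pdist (Projectivization.mk ℂ v hv)
      (Projectivization.mk ℂ (v + t • w) (add_smul_ne_zero_of_notMem_span hv hw t)))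
      (𝓝 0) (𝓝 0) := by
  simp only [pdist_mk, WithLp.toLp_add, WithLp.toLp_smul]
  exact tendsto_chordalDist_add_smul (by simpa using hv) _

lemma tendsto_pdist_mk_smul_add {v w : Fin N → ℂ} (hv : v ≠ 0) (hw : w ∉ ℂ ∙ v) (hw0 : w ≠ 0) :
    Tendsto (fun s : ℂ => pdist (Projectivization.mk ℂ v hv)
      (Projectivization.mk ℂ (s • v + w) (smul_add_ne_zero_of_notMem_span hw s))) (𝓝 0)
      (𝓝 (pdist (Projectivization.mk ℂ v hv) (Projectivization.mk ℂ w hw0))) := by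
  simp only [pdist_mk, WithLp.toLp_add, WithLp.toLp_smul]
  exact tendsto_chordalDist_smul_add (by simpa using hv) (by simpa using hw0)

end ProjectiveSpace

section Equicontinuity

variable {N : ℕ}

def PdistEquicontinuousAt {ι : Type*}
    (f : ι → Projectivization ℂ (Fin N → ℂ) → Projectivization ℂ (Fin N → ℂ))
    (z : Projectivization ℂ (Fin N → ℂ)) : Prop :=
  ∀ ε > (0 : ℝ), ∃ δ > (0 : ℝ), ∀ w, pdist z w < δ → ∀ i, pdist (f i z) (f i w) < ε

open scoped Matrix.Norms.L2Operator

lemma pdist_projAct_le (g : GL (Fin N) ℂ) (z w : Projectivization ℂ (Fin N → ℂ)) :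
    pdist (projAct g z) (projAct g w) ≤
      ‖(g : Matrix (Fin N) (Fin N) ℂ)‖ * ‖((g⁻¹ : GL (Fin N) ℂ) : Matrix (Fin N) (Fin N) ℂ)‖ *
        pdist z w := by
  rw [← z.mk_rep, ← w.mk_rep, projAct_mk, projAct_mk, pdist_mk, pdist_mk,
    ← Matrix.toEuclideanCLM_toLp, ← Matrix.toEuclideanCLM_toLp]
  refine chordalDist_map_le (Matrix.toEuclideanCLM (𝕜 := ℂ) (n := Fin N) g)
    (Matrix.toEuclideanCLM (𝕜 := ℂ) (n := Fin N) ↑g⁻¹) (fun x => ?_) _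
    (by simpa using w.rep_nonzero)
  rw [← mul_apply_eq_comp, ← map_mul, Units.inv_mul, map_one, one_apply_eq_self]

lemma pdistEquicontinuousAt_of_norm_mul_norm_inv_le {ι : Type*} (g : ι → GL (Fin N) ℂ) {C : ℝ}
    (hC : ∀ i, ‖(g i : Matrix (Fin N) (Fin N) ℂ)‖ *
      ‖(((g i)⁻¹ : GL (Fin N) ℂ) : Matrix (Fin N) (Fin N) ℂ)‖ ≤ C)
    (z : Projectivization ℂ (Fin N → ℂ)) :
    PdistEquicontinuousAt (fun i => projAct (g i)) z := by
  intro ε hε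
  refine ⟨ε / (|C| + 1), by positivity, fun w hw i => ?_⟩
  have hzw : 0 ≤ pdist z w := Real.sqrt_nonneg _
  calc pdist (projAct (g i) z) (projAct (g i) w) ≤ (|C| + 1) * pdist z w :=
        (pdist_projAct_le _ z w).trans
          (mul_le_mul_of_nonneg_right ((hC i).trans (by linarith [le_abs_self C])) hzw)
    _ < (|C| + 1) * (ε / (|C| + 1)) := by gcongr
    _ = ε := mul_div_cancel₀ _ (by positivity)

lemma exists_norm_zpow_le_of_isDiagonalizable (G : GL (Fin N) ℂ)
    (hG : IsDiagonalizable (G : Matrix (Fin N) (Fin N) ℂ))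
    (hspec : ∀ μ ∈ spectrum ℂ (G : Matrix (Fin N) (Fin N) ℂ), ‖μ‖ = 1) :
    ∃ C, ∀ m : ℤ, ‖((G ^ m : GL (Fin N) ℂ) : Matrix (Fin N) (Fin N) ℂ)‖ ≤ C := by
  obtain ⟨P, d, hPd⟩ := hG
  have hd : ∀ i, ‖d i‖ = 1 := fun i => hspec _ <| by
    have : d i ∈ spectrum ℂ (Matrix.diagonal d) := by simp
    rwa [← hPd, spectrum.units_conjugate'] at this
  have hu : Matrix.diagonal d ∈ unitary (Matrix (Fin N) (Fin N) ℂ) := by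
    rw [← Matrix.unitaryGroup, Matrix.mem_unitaryGroup_iff', Matrix.star_eq_conjTranspose,
      Matrix.diagonal_conjTranspose, Matrix.diagonal_mul_diagonal, ← Matrix.diagonal_one]
    congr 1
    ext i
    simp [RCLike.conj_mul, hd]
  set u : unitary (Matrix (Fin N) (Fin N) ℂ) := ⟨_, hu⟩
  have hGPu : G = P * Unitary.toUnits u * P⁻¹ := Units.ext <| by
    change (G : Matrix (Fin N) (Fin N) ℂ) =
      P * Matrix.diagonal d * ((P⁻¹ : GL (Fin N) ℂ) : Matrix (Fin N) (Fin N) ℂ)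
    rw [← hPd]
    simp [mul_assoc]
  refine ⟨‖(P : Matrix (Fin N) (Fin N) ℂ)‖ * ‖((P⁻¹ : GL (Fin N) ℂ) : Matrix (Fin N) (Fin N) ℂ)‖,
    fun m => ?_⟩
  rw [hGPu, conj_zpow, ← map_zpow, Units.val_mul, Units.val_mul, mul_assoc]
  calc _ ≤ _ := norm_mul_le _ _
    _ = _ := by rw [Unitary.val_toUnits_apply, CStarRing.norm_coe_unitary_mul]

lemma pdistEquicontinuousAt_zpow_of_isDiagonalizable (G : GL (Fin N) ℂ)
    (hG : IsDiagonalizable (G : Matrix (Fin N) (Fin N) ℂ))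
    (hspec : ∀ μ ∈ spectrum ℂ (G : Matrix (Fin N) (Fin N) ℂ), ‖μ‖ = 1)
    (z : Projectivization ℂ (Fin N → ℂ)) :
    PdistEquicontinuousAt (fun m : ℤ => projAct (G ^ m)) z := by
  obtain ⟨C, hC⟩ := exists_norm_zpow_le_of_isDiagonalizable G hG hspec
  refine pdistEquicontinuousAt_of_norm_mul_norm_inv_le _ (C := C * C) (fun m => ?_) z
  rw [← _root_.zpow_neg]
  exact mul_le_mul (hC m) (hC (-m)) (norm_nonneg _)
    ((norm_nonneg (E := Matrix (Fin N) (Fin N) ℂ) _).trans (hC m))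

lemma not_pdistEquicontinuousAt_of_norm_lt (G : GL (Fin N) ℂ) {lam mu : ℂ} {v w : Fin N → ℂ}
    (hv : v ≠ 0) (hw : w ≠ 0) (hGv : (G : Matrix (Fin N) (Fin N) ℂ) *ᵥ v = lam • v)
    (hGw : (G : Matrix (Fin N) (Fin N) ℂ) *ᵥ w = mu • w) (hlt : ‖lam‖ < ‖mu‖) :
    ¬ PdistEquicontinuousAt (fun m : ℤ => projAct (G ^ m)) (Projectivization.mk ℂ v hv) := by
  have hmu := eigenvalue_ne_zero G hw hGw
  have hwv : w ∉ ℂ ∙ v := by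
    intro hmem
    obtain ⟨a, rfl⟩ := Submodule.mem_span_singleton.1 hmem
    rw [Matrix.mulVec_smul, hGv, smul_comm] at hGw
    exact hlt.ne (congrArg _ (smul_left_injective ℂ hw hGw))
  intro h
  have hd := pdist_mk_pos hv hwv hw
  obtain ⟨δ, hδ, hδd⟩ := h _ (half_pos hd)
  obtain ⟨t, htδ, ht : t ≠ 0⟩ :=
    (((tendsto_pdist_mk_add_smul hv hwv).mono_left nhdsWithin_le_nhds).eventually
      (gt_mem_nhds hδ) |>.and (self_mem_nhdsWithin (s := {0}ᶜ))).exists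
  have hq : Tendsto (fun k : ℕ => t⁻¹ * (lam / mu) ^ k) atTop (𝓝 0) := by
    have hq1 : ‖lam / mu‖ < 1 := by
      rw [norm_div, div_lt_one (norm_pos_iff.2 hmu)]
      exact hlt
    simpa using (tendsto_pow_atTop_nhds_zero_of_norm_lt_one hq1).const_mul t⁻¹
  obtain ⟨k, hk⟩ := (((tendsto_pdist_mk_smul_add hv hwv hw).comp hq).eventually
    (lt_mem_nhds (half_lt_self hd))).exists
  have hδk := hδd _ htδ k
  beta_reduce at hδk
  rw [projAct_pow_mk hv hv (Matrix.pow_mulVec_of_mulVec_eq_smul hGv k),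
    projAct_pow_mk _ (smul_add_ne_zero_of_notMem_span hwv _) (c := t * mu ^ k)] at hδk
  · exact lt_asymm hk hδk
  · rw [Matrix.mulVec_add, Matrix.mulVec_smul, Matrix.pow_mulVec_of_mulVec_eq_smul hGv,
      Matrix.pow_mulVec_of_mulVec_eq_smul hGw]
    match_scalars
    · rw [div_pow]
      field_simp
    · ring

lemma not_pdistEquicontinuousAt_of_jordanChain (G : GL (Fin N) ℂ) {lam : ℂ} {v w : Fin N → ℂ}
    (hv : v ≠ 0) (hGv : (G : Matrix (Fin N) (Fin N) ℂ) *ᵥ v = lam • v)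
    (hGw : (G : Matrix (Fin N) (Fin N) ℂ) *ᵥ w = lam • w + v) :
    ¬ PdistEquicontinuousAt (fun m : ℤ => projAct (G ^ m)) (Projectivization.mk ℂ v hv) := by
  have hlam := eigenvalue_ne_zero G hv hGv
  have hwv : w ∉ ℂ ∙ v := by
    intro hmem
    obtain ⟨a, rfl⟩ := Submodule.mem_span_singleton.1 hmem
    rw [Matrix.mulVec_smul, hGv, smul_comm, left_eq_add] at hGw
    exact hv hGw
  have hw : w ≠ 0 := fun h => hwv (h ▸ Submodule.zero_mem _)
  intro h
  obtain ⟨δ, hδ, hδd⟩ := h _ (pdist_mk_pos hv hwv hw)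
  -- `t = -λ / (k + 1)` makes the `v`-component of `G ^ (k + 1) *ᵥ (v + t • w)` vanish
  have ht : Tendsto (fun k : ℕ => -lam * (1 / ((k : ℂ) + 1))) atTop (𝓝 0) := by
    simpa using tendsto_one_div_add_atTop_nhds_zero_nat.const_mul (-lam)
  obtain ⟨k, hk⟩ :=
    (((tendsto_pdist_mk_add_smul hv hwv).comp ht).eventually (gt_mem_nhds hδ)).exists
  have hδk := hδd _ hk ((k + 1 : ℕ) : ℤ)
  beta_reduce at hδk
  rw [projAct_pow_mk hv hv (Matrix.pow_mulVec_of_mulVec_eq_smul hGv _),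
    projAct_pow_mk _ hw (c := -lam * (1 / ((k : ℂ) + 1)) * lam ^ (k + 1))] at hδk
  · exact lt_irrefl _ hδk
  · rw [Matrix.mulVec_add, Matrix.mulVec_smul, Matrix.pow_mulVec_of_mulVec_eq_smul hGv,
      Matrix.pow_succ_mulVec_of_jordanChain hGv hGw]
    have : (k : ℂ) + 1 ≠ 0 := Nat.cast_add_one_ne_zero k
    match_scalars
    · field_simp
      ring
    · ring

lemma norm_le_of_pdistEquicontinuousAt (G : GL (Fin N) ℂ)
    (h : ∀ z, PdistEquicontinuousAt (fun m : ℤ => projAct (G ^ m)) z) {lam mu : ℂ}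
    (hlam : lam ∈ spectrum ℂ (G : Matrix (Fin N) (Fin N) ℂ))
    (hmu : mu ∈ spectrum ℂ (G : Matrix (Fin N) (Fin N) ℂ)) : ‖mu‖ ≤ ‖lam‖ := by
  by_contra! hlt
  obtain ⟨v, hv, hGv⟩ := Matrix.exists_mulVec_eq_smul_of_mem_spectrum hlam
  obtain ⟨w, hw, hGw⟩ := Matrix.exists_mulVec_eq_smul_of_mem_spectrum hmu
  exact not_pdistEquicontinuousAt_of_norm_lt G hv hw hGv hGw hlt (h _)

lemma isDiagonalizable_of_pdistEquicontinuousAt (G : GL (Fin N) ℂ)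
    (h : ∀ z, PdistEquicontinuousAt (fun m : ℤ => projAct (G ^ m)) z) :
    IsDiagonalizable (G : Matrix (Fin N) (Fin N) ℂ) := by
  have hmax : ∀ μ, Module.End.maxGenEigenspace (Matrix.toLin' (G : Matrix (Fin N) (Fin N) ℂ)) μ ≤
      Module.End.eigenspace (Matrix.toLin' (G : Matrix (Fin N) (Fin N) ℂ)) μ :=
    fun μ => Module.End.maxGenEigenspace_le_eigenspace fun x hx => by
      by_contra hx'
      rw [Module.End.mem_eigenspace_iff, Matrix.toLin'_apply] at hx hx'
      exact not_pdistEquicontinuousAt_of_jordanChain G (sub_ne_zero.2 hx') hx (by abel) (h _)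
  obtain ⟨b, d, hb⟩ :=
    exists_basis_mulVec_eq_smul (Module.End.iSup_eigenspace_eq_top_of_maxGenEigenspace_le hmax)
  exact isDiagonalizable_of_basis b d hb

end Equicontinuity

/-- For `γ̃ ∈ SL(n+1,ℂ)` with induced projective map `γ`, the family
`{γᵐ : m ∈ ℤ}` is equicontinuous at every point of `ℙⁿ` (w.r.t. the canonical uniform
structure, here expressed by the compatible metric `pdist`) iff `γ̃` is diagonalizable
with all eigenvalues of modulus 1. -/
theorem stmt2 {n : ℕ} (A : Matrix.SpecialLinearGroup (Fin (n + 1)) ℂ) :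
    (∀ z : Projectivization ℂ (Fin (n + 1) → ℂ), ∀ ε > (0 : ℝ), ∃ δ > (0 : ℝ),
      ∀ w : Projectivization ℂ (Fin (n + 1) → ℂ), pdist z w < δ →
        ∀ m : ℤ, pdist (projAct (Matrix.SpecialLinearGroup.toGL A ^ m) z)
          (projAct (Matrix.SpecialLinearGroup.toGL A ^ m) w) < ε) ↔
    (IsDiagonalizable (A : Matrix (Fin (n + 1)) (Fin (n + 1)) ℂ) ∧
      ∀ μ ∈ spectrum ℂ (A : Matrix (Fin (n + 1)) (Fin (n + 1)) ℂ), ‖μ‖ = 1) := by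
  let G := Matrix.SpecialLinearGroup.toGL A
  change (∀ z, PdistEquicontinuousAt (fun m : ℤ => projAct (G ^ m)) z) ↔ _
  refine ⟨fun h => ⟨isDiagonalizable_of_pdistEquicontinuousAt G h, fun μ hμ => ?_⟩,
    fun ⟨hdiag, hspec⟩ => pdistEquicontinuousAt_zpow_of_isDiagonalizable G hdiag hspec⟩
  refine Matrix.eq_one_of_norm_det_eq_one (A := (A : Matrix (Fin (n + 1)) (Fin (n + 1)) ℂ))
    (by rw [Matrix.SpecialLinearGroup.det_coe, norm_one]) fun ν hν => le_antisymm ?_ ?_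
  · exact norm_le_of_pdistEquicontinuousAt G h hμ hν
  · exact norm_le_of_pdistEquicontinuousAt G h hν hμ
end
end

section
/- Let γ̃ ∈ GL(n+1,ℂ) and let γ = [[γ̃]] be the induced projective transformation of ℙⁿ. If there exists a nonempty open set W ⊆ ℙⁿ with W ≠ ℙⁿ and γ(closure(W)) ⊆ W, then the set Λ(⟨γ⟩) is nonempty and is not a connected subset of ℙⁿ. -/
/-!
Write `V` for the complement of `closure W`. Since `W` is open, `γ⁻¹` maps `closure V` into `V`,
so `V` is an attracting region for `γ⁻¹` just as `W` is for `γ`. Along a sequence of exponents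
tending to `+∞`, an orbit either enters `closure W` and then stays in `γ (closure W)`, or never
does, and then its limit lies in `γ⁻¹ (closure V)`; symmetrically for exponents tending to `-∞`.
Hence `Λ(⟨γ⟩)` lies in the union of the disjoint open sets `W` and `V`, and compactness of `ℙⁿ`
produces limit points in each of them.
-/

open Filter Topology Matrix

noncomputable section

/-- `Λ(⟨γ⟩)`: the closure of the set of points `p ∈ ℙⁿ` for which there exist `z ∈ ℙⁿ`
and a sequence of integers `(m i)` with `|m i| → ∞` and `γ^(m i) z → p`. -/
def LambdaSet {n : ℕ} (A : GL (Fin (n + 1)) ℂ) : Set (Projectivization ℂ (Fin (n + 1) → ℂ)) :=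
  closure {p | ∃ z : Projectivization ℂ (Fin (n + 1) → ℂ), ∃ m : ℕ → ℤ,
    Tendsto (fun i => |m i|) atTop atTop ∧
    Tendsto (fun i => projAct (A ^ m i) z) atTop (𝓝 p)}

open Set
open scoped Pointwise LinearAlgebra.Projectivization

section Attractor

variable {G X : Type*} [Group G] [TopologicalSpace X] [MulAction G X] {g : G} {U : Set X}

def orbitLimitSet (g : G) : Set X :=
  {p | ∃ z : X, ∃ m : ℕ → ℤ, Tendsto (fun i => |m i|) atTop atTop ∧
    Tendsto (fun i => g ^ m i • z) atTop (𝓝 p)}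

lemma orbitLimitSet_inv (g : G) : orbitLimitSet (X := X) g⁻¹ = orbitLimitSet g := by
  ext p
  constructor <;>
  · rintro ⟨z, m, hm, hp⟩
    exact ⟨z, fun i => -m i, by simpa using hm, by simpa [_root_.inv_zpow'] using hp⟩

lemma inv_smul_closure_compl_closure_subset (hUo : IsOpen U) (hU : g • closure U ⊆ U) :
    g⁻¹ • closure (closure U)ᶜ ⊆ (closure U)ᶜ := by
  rintro _ ⟨x, hx, rfl⟩ hgx
  have hxU : x ∉ U := by
    have : closure (closure U)ᶜ ⊆ Uᶜ :=
      closure_minimal (compl_subset_compl.2 subset_closure) hUo.isClosed_compl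
    exact this hx
  exact hxU (by simpa using hU (smul_mem_smul_set hgx))

lemma pow_smul_mem_closure (hU : g • closure U ⊆ U) {x : X} (hx : x ∈ closure U) (k : ℕ) :
    g ^ k • x ∈ closure U := by
  induction k with
  | zero => simpa using hx
  | succ k ih => rw [pow_succ', mul_smul]; exact subset_closure (hU (smul_mem_smul_set ih))

variable [ContinuousConstSMul G X]

lemma mem_smul_closure_of_tendsto {ι : Type*} {l : Filter ι} [l.NeBot] {ψ : ι → ℤ}
    (hU : g • closure U ⊆ U) {z p : X} {M : ℕ} (hM : g ^ M • z ∈ closure U)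
    (hψ : Tendsto ψ l atTop) (hp : Tendsto (fun i => g ^ ψ i • z) l (𝓝 p)) :
    p ∈ g • closure U := by
  refine (isClosed_closure.smul g).mem_of_tendsto hp ?_
  filter_upwards [hψ.eventually_ge_atTop (M + 1)] with i hi
  obtain ⟨k, hk⟩ := Int.eq_ofNat_of_zero_le (sub_nonneg.2 hi)
  have : ψ i = ((1 + k + M : ℕ) : ℤ) := by omega
  rw [this, zpow_natCast, pow_add, pow_add, pow_one, mul_smul, mul_smul]
  exact smul_mem_smul_set (pow_smul_mem_closure hU hM k)

lemma smul_mem_closure_compl_of_tendsto {ι : Type*} {l : Filter ι} [l.NeBot] {ψ : ι → ℤ}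
    {z p : X} (hz : ∀ M : ℕ, g ^ M • z ∉ closure U)
    (hψ : Tendsto ψ l atTop) (hp : Tendsto (fun i => g ^ ψ i • z) l (𝓝 p)) :
    g • p ∈ closure (closure U)ᶜ := by
  have hgp : Tendsto (fun i => g ^ (1 + ψ i) • z) l (𝓝 (g • p)) := by
    simpa [_root_.zpow_one_add, mul_smul] using (hp.const_smul g)
  refine mem_closure_of_tendsto hgp ?_
  filter_upwards [hψ.eventually_ge_atTop 0] with i hi
  obtain ⟨k, hk⟩ := Int.eq_ofNat_of_zero_le (by omega : 0 ≤ 1 + ψ i)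
  rw [hk, zpow_natCast]
  exact hz k

lemma mem_smul_closure_or_mem_inv_smul_closure_compl {ι : Type*} {l : Filter ι} [l.NeBot]
    {ψ : ι → ℤ} (hU : g • closure U ⊆ U) {z p : X}
    (hψ : Tendsto ψ l atTop) (hp : Tendsto (fun i => g ^ ψ i • z) l (𝓝 p)) :
    p ∈ g • closure U ∪ g⁻¹ • closure (closure U)ᶜ := by
  by_cases hz : ∃ M : ℕ, g ^ M • z ∈ closure U
  · obtain ⟨M, hM⟩ := hz
    exact Or.inl (mem_smul_closure_of_tendsto hU hM hψ hp)
  · exact Or.inr (mem_inv_smul_set_iff.2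
      (smul_mem_closure_compl_of_tendsto (not_exists.1 hz) hψ hp))

lemma orbitLimitSet_subset_union (hUo : IsOpen U) (hU : g • closure U ⊆ U) :
    orbitLimitSet g ⊆ g • closure U ∪ g⁻¹ • closure (closure U)ᶜ := by
  rintro p ⟨z, m, hm, hp⟩
  have hsign : ∃ᶠ i in atTop, 0 ≤ m i ∨ m i ≤ 0 := .of_forall fun i => le_total 0 (m i)
  rcases frequently_or_distrib.1 hsign with hpos | hneg
  · obtain ⟨φ, hφ, hφpos⟩ := extraction_of_frequently_atTop hpos
    have hmφ : Tendsto (m ∘ φ) atTop atTop :=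
      (hm.comp hφ.tendsto_atTop).congr fun i => abs_of_nonneg (hφpos i)
    exact mem_smul_closure_or_mem_inv_smul_closure_compl hU hmφ (hp.comp hφ.tendsto_atTop)
  · obtain ⟨φ, hφ, hφneg⟩ := extraction_of_frequently_atTop hneg
    have hmφ : Tendsto (fun i => -m (φ i)) atTop atTop :=
      (hm.comp hφ.tendsto_atTop).congr fun i => abs_of_nonpos (hφneg i)
    have hp' : Tendsto (fun i => g⁻¹ ^ (-m (φ i)) • z) atTop (𝓝 p) := by
      simpa [Function.comp_def, _root_.inv_zpow'] using hp.comp hφ.tendsto_atTop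
    rcases mem_smul_closure_or_mem_inv_smul_closure_compl
      (inv_smul_closure_compl_closure_subset hUo hU) hmφ hp' with h | h
    · exact Or.inr h
    · rw [inv_inv] at h
      exact Or.inl (smul_set_mono
        (closure_minimal (compl_subset_comm.2 subset_closure) isClosed_closure) h)

lemma orbitLimitSet_inter_nonempty [SeqCompactSpace X] (hU : g • closure U ⊆ U)
    (hUne : U.Nonempty) : (orbitLimitSet g ∩ U).Nonempty := by
  obtain ⟨z, hz⟩ := hUne
  obtain ⟨p, φ, hφ, hp⟩ := SeqCompactSpace.tendsto_subseq fun k : ℕ => g ^ k • z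
  have hφ' : Tendsto (fun i => (φ i : ℤ)) atTop atTop :=
    tendsto_natCast_atTop_atTop.comp hφ.tendsto_atTop
  have hp' : Tendsto (fun i => g ^ (φ i : ℤ) • z) atTop (𝓝 p) := by
    simpa [Function.comp_def] using hp
  have hz' : g ^ 0 • z ∈ closure U := by simpa using subset_closure hz
  exact ⟨p, ⟨z, _, hφ'.congr fun i => (abs_of_nonneg (by positivity)).symm, hp'⟩,
    hU (mem_smul_closure_of_tendsto hU hz' hφ' hp')⟩

theorem not_isPreconnected_closure_orbitLimitSet [SeqCompactSpace X] (hUne : U.Nonempty)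
    (hUo : IsOpen U) (hUuniv : U ≠ univ) (hU : g • closure U ⊆ U) :
    ¬ IsPreconnected (closure (orbitLimitSet g : Set X)) := by
  set V := (closure U)ᶜ
  have hV : g⁻¹ • closure V ⊆ V := inv_smul_closure_compl_closure_subset hUo hU
  have hVne : V.Nonempty := nonempty_compl.2 fun h =>
    hUuniv (eq_univ_of_univ_subset (by simpa [h] using hU))
  have hsub : closure (orbitLimitSet g) ⊆ U ∪ V :=
    (closure_minimal (orbitLimitSet_subset_union hUo hU)
      ((isClosed_closure.smul g).union (isClosed_closure.smul g⁻¹))).trans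
      (union_subset_union hU hV)
  obtain ⟨p, hpS, hpU⟩ := orbitLimitSet_inter_nonempty hU hUne
  obtain ⟨q, hqS, hqV⟩ := orbitLimitSet_inter_nonempty hV hVne
  rw [orbitLimitSet_inv] at hqS
  intro hpre
  obtain ⟨x, -, hxU, hxV⟩ := hpre U V hUo isClosed_closure.isOpen_compl hsub
    ⟨p, subset_closure hpS, hpU⟩ ⟨q, subset_closure hqS, hqV⟩
  exact hxV (subset_closure hxU)

end Attractor

namespace Projectivization
variable {n : ℕ}

instance : ContinuousConstSMul (LinearMap.GeneralLinearGroup ℂ (Fin n → ℂ))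
    (ℙ ℂ (Fin n → ℂ)) where
  continuous_const_smul g := by
    change Continuous (map _ _)
    unfold map
    exact Continuous.quotient_map' (by fun_prop) _

instance : SeqCompactSpace (ℙ ℂ (Fin n → ℂ)) := by
  refine ⟨fun q _ => ?_⟩
  have hrep (i : ℕ) : ‖(q i).rep‖ ≠ 0 := norm_ne_zero_iff.2 (q i).rep_nonzero
  set u : ℕ → Fin n → ℂ := fun i => (‖(q i).rep‖⁻¹ : ℂ) • (q i).rep
  have hu (i : ℕ) : u i ∈ Metric.sphere 0 1 := by simp [u, norm_smul, hrep]
  obtain ⟨a, ha, φ, hφ, hua⟩ := (isCompact_sphere (0 : Fin n → ℂ) 1).tendsto_subseq hu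
  have ha0 : a ≠ 0 := ne_zero_of_mem_unit_sphere ⟨a, ha⟩
  refine ⟨mk ℂ a ha0, trivial, φ, hφ, ?_⟩
  have hq (i : ℕ) : q i = mk' ℂ ⟨u i, ne_zero_of_mem_unit_sphere ⟨_, hu i⟩⟩ := by
    conv_lhs => rw [← (q i).mk_rep]
    exact (mk_eq_mk_iff' ..).2 ⟨‖(q i).rep‖, by simp [u, smul_smul, hrep]⟩
  simp only [Function.comp_def, hq]
  exact (continuous_quotient_mk'.tendsto _).comp (tendsto_subtype_rng.2 hua)

end Projectivization

lemma projAct_apply {n : ℕ} (A : GL (Fin n) ℂ) (x : ℙ ℂ (Fin n → ℂ)) :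
    projAct A x = Matrix.GeneralLinearGroup.toLin A • x := rfl

lemma projAct_zpow_apply {n : ℕ} (A : GL (Fin n) ℂ) (m : ℤ) (x : ℙ ℂ (Fin n → ℂ)) :
    projAct (A ^ m) x = Matrix.GeneralLinearGroup.toLin A ^ m • x := by
  rw [projAct_apply, map_zpow]

lemma LambdaSet_eq_closure_orbitLimitSet {n : ℕ} (A : GL (Fin (n + 1)) ℂ) :
    LambdaSet A = closure (orbitLimitSet (Matrix.GeneralLinearGroup.toLin A)) := by
  simp only [LambdaSet, orbitLimitSet, projAct_zpow_apply]

/-- If for `γ = [[γ̃]]`, `γ̃ ∈ GL(n+1,ℂ)`, there is a nonempty proper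
open set `W ⊆ ℙⁿ` with `γ(closure W) ⊆ W`, then `Λ(⟨γ⟩)` is nonempty and is not a
connected subset of `ℙⁿ`. -/
theorem stmt5 {n : ℕ} (A : GL (Fin (n + 1)) ℂ)
    (h : ∃ W : Set (Projectivization ℂ (Fin (n + 1) → ℂ)), W.Nonempty ∧ IsOpen W ∧
      W ≠ Set.univ ∧ projAct A '' closure W ⊆ W) :
    (LambdaSet A).Nonempty ∧ ¬ IsPreconnected (LambdaSet A) := by
  obtain ⟨W, hWne, hWo, hWuniv, hW⟩ := h
  have hW' : Matrix.GeneralLinearGroup.toLin A • closure W ⊆ W := by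
    rw [← image_smul]
    exact hW
  rw [LambdaSet_eq_closure_orbitLimitSet]
  exact ⟨(orbitLimitSet_inter_nonempty hW' hWne).mono (inter_subset_left.trans subset_closure),
    not_isPreconnected_closure_orbitLimitSet hWne hWo hWuniv hW'⟩
end
end

section
/- Let T ∈ GL(n+1,ℂ) have characteristic polynomial ∏_{j=1}^{n+1} (X − α_j), let p ∈ ℂ^{n+1} \ {0} satisfy T p = α₁ p, and suppose |α₁| = max{ |α_j| : 1 ≤ j ≤ n+1 } and |α₁| ≠ |α_k| for every k ≥ 2. Then [p] is an attracting fixed point of [[T]] acting on ℙⁿ: [[T]][p] = [p] and there is an open neighborhood U of [p] in ℙⁿ such that for every q ∈ U, the sequence [[T]]ᵐ q converges to [p] as m → ∞. -/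
open Filter Topology Matrix Polynomial

noncomputable section

open scoped NNReal ENNReal

/-!
Since the `α j` with `j ≠ 0` differ from `α 0` in modulus, `α 0` is a simple root of the
characteristic polynomial `(X - α 0) * g`. Hence `ℂⁿ⁺¹ = ℂ p ⊕ W` with `W = ker g(T)` invariant,
and every eigenvalue of `T` on `W` is some `α j`, `j ≠ 0`, of modulus `< |α 0|`. By Gelfand's
formula `α 0⁻ᵐ Tᵐ` tends to zero on `W`, so `α 0⁻ᵐ Tᵐ v` tends to the `ℂ p`-component of `v`.
On the open set `{[v] | v ∉ W}` this component is nonzero, and therefore `[Tᵐ v] → [p]`.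
-/

theorem spectrum.eventually_norm_pow_le_of_spectralRadius_lt {A : Type*} [NormedRing A]
    [NormedAlgebra ℂ A] [CompleteSpace A] (a : A) {r : ℝ≥0} (h : spectralRadius ℂ a < r) :
    ∀ᶠ m : ℕ in atTop, ‖a ^ m‖ ≤ r ^ m := by
  filter_upwards [(pow_nnnorm_pow_one_div_tendsto_nhds_spectralRadius a).eventually_lt_const h,
    eventually_ne_atTop 0] with m hm hm0
  have hm' : (‖a ^ m‖₊ : ℝ≥0∞) < (r : ℝ≥0∞) ^ m := by
    simpa [← ENNReal.rpow_natCast, ← ENNReal.rpow_mul, hm0] using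
      ENNReal.rpow_lt_rpow hm (by positivity : (0 : ℝ) < m)
  exact_mod_cast hm'.le

theorem Polynomial.norm_lt_of_isRoot_prod_X_sub_C {K ι : Type*} [NormedField K] {s : Finset ι}
    {α : ι → K} {r : ℝ} (h : ∀ j ∈ s, ‖α j‖ < r) {μ : K}
    (hμ : (∏ j ∈ s, (X - C (α j))).IsRoot μ) : ‖μ‖ < r := by
  obtain ⟨j, hj, hjμ⟩ := (isRoot_prod _ _ μ).mp hμ
  rw [IsRoot, eval_sub, eval_X, eval_C, sub_eq_zero] at hjμ
  exact hjμ ▸ h j hj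

namespace Module.End

section Algebraic

variable {K V : Type*} [Field K] [AddCommGroup V] [Module K V]

theorem apply_mem_ker_aeval (f : End K V) (g : K[X]) {x : V}
    (hx : x ∈ LinearMap.ker (aeval f g)) : f x ∈ LinearMap.ker (aeval f g) := by
  have hcomm : aeval f g * f = f * aeval f g := by
    simpa only [aeval_X] using ((Commute.all X g).map (aeval f)).eq.symm
  rw [LinearMap.mem_ker, ← mul_apply, hcomm, mul_apply, LinearMap.mem_ker.mp hx, map_zero]

theorem isRoot_of_hasEigenvalue_restrict_ker_aeval {f : End K V} {g : K[X]} {μ : K}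
    (hμ : HasEigenvalue (f.restrict (p := LinearMap.ker (aeval f g))
      fun _ => apply_mem_ker_aeval f g) μ) : g.IsRoot μ := by
  obtain ⟨x, hx⟩ := hμ.exists_hasEigenvector
  have hx' : f.HasEigenvector μ x :=
    ⟨mem_eigenspace_iff.mpr congr($(hx.apply_eq_smul).val), by simpa using hx.2⟩
  have h := aeval_apply_of_hasEigenvector (p := g) hx'
  rw [LinearMap.mem_ker.mp x.2, eq_comm, smul_eq_zero] at h
  exact h.resolve_right hx'.2

theorem eigenspace_eq_ker_aeval (f : End K V) (a : K) :
    f.eigenspace a = LinearMap.ker (aeval f (X - C a)) := by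
  rw [eigenspace_def, map_sub, aeval_X, aeval_C, algebraMap_end_eq_smul_id]
  rfl

variable [FiniteDimensional K V] {f : End K V} {a : K} {g : K[X]}

theorem isCompl_eigenspace_ker_aeval (hf : f.charpoly = (X - C a) * g) (hg : ¬ g.IsRoot a) :
    IsCompl (f.eigenspace a) (LinearMap.ker (aeval f g)) := by
  have hcop : IsCoprime (X - C a) g :=
    (irreducible_X_sub_C a).coprime_iff_not_dvd.mpr (by rwa [dvd_iff_isRoot])
  rw [eigenspace_eq_ker_aeval]
  refine ⟨disjoint_ker_aeval_of_isCoprime f hcop, codisjoint_iff.mpr ?_⟩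
  rw [sup_ker_aeval_eq_ker_aeval_mul_of_coprime f hcop, ← hf, LinearMap.aeval_self_charpoly,
    LinearMap.ker_zero]

theorem eigenspace_eq_span_singleton (hf : f.charpoly = (X - C a) * g) (hg : ¬ g.IsRoot a)
    {p : V} (hp : f.HasEigenvector a p) : f.eigenspace a = K ∙ p := by
  have hmult : f.charpoly.rootMultiplicity a = 1 := by
    have hne : (X - C a) * g ≠ 0 :=
      mul_ne_zero (X_sub_C_ne_zero a) (by rintro rfl; exact hg (by simp))
    rw [hf, rootMultiplicity_mul hne, rootMultiplicity_X_sub_C_self, rootMultiplicity_eq_zero hg]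
  refine (Submodule.eq_of_le_of_finrank_le ?_ ?_).symm
  · exact (Submodule.span_singleton_le_iff_mem _ _).mpr hp.1
  · rw [finrank_span_singleton hp.2, ← hmult]
    exact LinearMap.finrank_eigenspace_le f a

end Algebraic

section Analytic

variable {V : Type*} [NormedAddCommGroup V] [NormedSpace ℂ V] [FiniteDimensional ℂ V]

theorem spectralRadius_toContinuousLinearMap_lt (g : End ℂ V) {a : ℂ} (ha : a ≠ 0)
    (hg : ∀ μ, g.HasEigenvalue μ → ‖μ‖ < ‖a‖) :
    spectralRadius ℂ (toContinuousLinearMap V g) < ‖a‖₊ := by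
  have hspec : ∀ μ ∈ spectrum ℂ (toContinuousLinearMap V g), ‖μ‖₊ < ‖a‖₊ := fun μ hμ => by
    rw [AlgEquiv.spectrum_eq, ← hasEigenvalue_iff_mem_spectrum] at hμ
    exact hg μ hμ
  rcases (spectrum ℂ (toContinuousLinearMap V g)).eq_empty_or_nonempty with hempty | hne
  · simpa [spectralRadius, hempty] using ha
  · exact spectrum.spectralRadius_lt_of_forall_lt_of_nonempty hne hspec

theorem tendsto_inv_pow_smul_pow_apply (g : End ℂ V) {a : ℂ} (ha : a ≠ 0)
    (hg : ∀ μ, g.HasEigenvalue μ → ‖μ‖ < ‖a‖) (x : V) :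
    Tendsto (fun m : ℕ => (a ^ m)⁻¹ • (g ^ m) x) atTop (𝓝 0) := by
  obtain ⟨r, hr, hra⟩ := ENNReal.lt_iff_exists_nnreal_btwn.mp
    (spectralRadius_toContinuousLinearMap_lt g ha hg)
  have hra : (r : ℝ) < ‖a‖ := by exact_mod_cast hra
  have hdecay : Tendsto (fun m : ℕ => (r / ‖a‖) ^ m * ‖x‖) atTop (𝓝 0) := by
    simpa using (tendsto_pow_atTop_nhds_zero_of_lt_one (by positivity)
      ((div_lt_one (norm_pos_iff.mpr ha)).mpr hra)).mul_const ‖x‖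
  refine squeeze_zero_norm' ?_ hdecay
  filter_upwards [spectrum.eventually_norm_pow_le_of_spectralRadius_lt _ hr] with m hm
  rw [← map_pow] at hm
  calc ‖(a ^ m)⁻¹ • (g ^ m) x‖ = (‖a‖ ^ m)⁻¹ * ‖toContinuousLinearMap V (g ^ m) x‖ := by
        rw [norm_smul, norm_inv, norm_pow]; rfl
    _ ≤ (‖a‖ ^ m)⁻¹ * (r ^ m * ‖x‖) := by
        gcongr
        exact (ContinuousLinearMap.le_opNorm _ _).trans (by gcongr)
    _ = (r / ‖a‖) ^ m * ‖x‖ := by rw [div_pow]; ring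

theorem tendsto_inv_pow_smul_pow_apply_projection {f : End ℂ V} {a : ℂ} (ha : a ≠ 0)
    {E W : Submodule ℂ V} (hEW : IsCompl E W) (hE : E ≤ f.eigenspace a)
    (hW : ∀ x ∈ W, f x ∈ W) (hWa : ∀ μ, HasEigenvalue (f.restrict hW) μ → ‖μ‖ < ‖a‖) (v : V) :
    Tendsto (fun m : ℕ => (a ^ m)⁻¹ • (f ^ m) v) atTop (𝓝 (E.projection W hEW v)) := by
  set e := E.projection W hEW v
  set w : W := W.projectionOnto E hEW.symm v
  have hpow_e : ∀ m : ℕ, (f ^ m) e = a ^ m • e := by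
    intro m
    induction m with
    | zero => simp
    | succ m ih =>
      rw [pow_succ', mul_apply, ih, map_smul,
        mem_eigenspace_iff.mp (hE (E.projection_apply_mem hEW v)), smul_smul, pow_succ]
  have hpow_w : ∀ m : ℕ, (f ^ m) w = ((f.restrict hW ^ m) w : V) := fun m => by
    rw [pow_restrict, LinearMap.coe_restrict_apply]
  have hsplit : ∀ m : ℕ,
      (a ^ m)⁻¹ • (f ^ m) v = e + ((a ^ m)⁻¹ • (f.restrict hW ^ m) w : W) := by
    intro m
    conv_lhs => rw [← E.projection_add_projection_eq_self hEW v]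
    rw [map_add, hpow_e, smul_add, inv_smul_smul₀ (pow_ne_zero m ha), Submodule.coe_smul,
      ← hpow_w]
    rfl
  simpa [hsplit] using tendsto_const_nhds.add
    ((continuous_subtype_val.tendsto 0).comp (tendsto_inv_pow_smul_pow_apply _ ha hWa w))

end Analytic

end Module.End

theorem Projectivization.submodule_mk_le_iff {K V : Type*} [DivisionRing K] [AddCommGroup V]
    [Module K V] {v : V} (hv : v ≠ 0) {W : Submodule K V} :
    (Projectivization.mk K v hv).submodule ≤ W ↔ v ∈ W := by
  rw [Projectivization.submodule_mk, Submodule.span_singleton_le_iff_mem]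

section ProjectiveSpace

variable {n : ℕ}

theorem toLin'_apply_ne_zero (A : GL (Fin n) ℂ) {v : Fin n → ℂ} (hv : v ≠ 0) :
    toLin' (A : Matrix (Fin n) (Fin n) ℂ) v ≠ 0 :=
  (LinearMap.GeneralLinearGroup.toLinearEquiv
    (Matrix.GeneralLinearGroup.toLin A)).map_ne_zero_iff.mpr hv

theorem projAct_mk_s6 (A : GL (Fin n) ℂ) {v : Fin n → ℂ} (hv : v ≠ 0) :
    projAct A (Projectivization.mk ℂ v hv) =
      Projectivization.mk ℂ (toLin' (A : Matrix (Fin n) (Fin n) ℂ) v)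
        (toLin'_apply_ne_zero A hv) :=
  Projectivization.map_mk _ _ v hv

theorem isQuotientMap_projectivization_mk' :
    IsQuotientMap (Projectivization.mk' ℂ :
      {v : Fin n → ℂ // v ≠ 0} → Projectivization ℂ (Fin n → ℂ)) :=
  isQuotientMap_quot_mk

theorem isOpen_setOf_not_submodule_le (W : Submodule ℂ (Fin n → ℂ)) :
    IsOpen {x : Projectivization ℂ (Fin n → ℂ) | ¬ x.submodule ≤ W} := by
  have hpre : Projectivization.mk' ℂ ⁻¹' {x | ¬ x.submodule ≤ W} = Subtype.val ⁻¹' (↑W)ᶜ := by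
    ext ⟨v, hv⟩
    exact (Projectivization.submodule_mk_le_iff hv).not
  rw [← isQuotientMap_projectivization_mk'.isOpen_preimage]
  exact hpre ▸ (W.closed_of_finiteDimensional.isOpen_compl.preimage continuous_subtype_val)

theorem tendsto_projAct_pow_mk {A : GL (Fin n) ℂ} {a : ℂ} (ha : a ≠ 0) {v e : Fin n → ℂ}
    (hv : v ≠ 0) (he : e ≠ 0)
    (h : Tendsto (fun m : ℕ => (a ^ m)⁻¹ • (toLin' (A : Matrix (Fin n) (Fin n) ℂ) ^ m) v) atTop
      (𝓝 e)) :
    Tendsto (fun m : ℕ => projAct (A ^ m) (Projectivization.mk ℂ v hv)) atTop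
      (𝓝 (Projectivization.mk ℂ e he)) := by
  have hpow : ∀ m : ℕ, toLin' ((A ^ m : GL (Fin n) ℂ) : Matrix (Fin n) (Fin n) ℂ) =
      toLin' (A : Matrix (Fin n) (Fin n) ℂ) ^ m := fun m => by
    rw [Units.val_pow_eq_pow_val, toLin'_pow]
  have hu : ∀ m : ℕ, (a ^ m)⁻¹ • (toLin' (A : Matrix (Fin n) (Fin n) ℂ) ^ m) v ≠ 0 := fun m =>
    smul_ne_zero (inv_ne_zero (pow_ne_zero m ha)) (hpow m ▸ toLin'_apply_ne_zero (A ^ m) hv)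
  have hlim : Tendsto (fun m => Projectivization.mk ℂ _ (hu m)) atTop
      (𝓝 (Projectivization.mk ℂ e he)) :=
    (isQuotientMap_projectivization_mk'.continuous.tendsto ⟨e, he⟩).comp
      (tendsto_subtype_rng.mpr h)
  refine hlim.congr fun m => ?_
  rw [projAct_mk_s6, Projectivization.mk_eq_mk_iff', hpow]
  exact ⟨(a ^ m)⁻¹, rfl⟩

theorem tendsto_projAct_pow_of_isCompl_span_singleton {A : GL (Fin n) ℂ} {a : ℂ} (ha : a ≠ 0)
    {p : Fin n → ℂ} (hp : p ≠ 0) (hAp : toLin' (A : Matrix (Fin n) (Fin n) ℂ) p = a • p)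
    {W : Submodule ℂ (Fin n → ℂ)} (hpW : IsCompl (ℂ ∙ p) W)
    (hW : ∀ x ∈ W, toLin' (A : Matrix (Fin n) (Fin n) ℂ) x ∈ W)
    (hWa : ∀ μ, Module.End.HasEigenvalue ((toLin' (A : Matrix (Fin n) (Fin n) ℂ)).restrict hW) μ →
      ‖μ‖ < ‖a‖)
    {q : Projectivization ℂ (Fin n → ℂ)} (hq : ¬ q.submodule ≤ W) :
    Tendsto (fun m : ℕ => projAct (A ^ m) q) atTop (𝓝 (Projectivization.mk ℂ p hp)) := by
  rw [← q.mk_rep] at hq ⊢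
  set e := (ℂ ∙ p).projection W hpW q.rep
  have he : e ≠ 0 := (Submodule.projection_apply_eq_zero_iff hpW).not.mpr
    ((Projectivization.submodule_mk_le_iff _).not.mp hq)
  have hep : Projectivization.mk ℂ e he = Projectivization.mk ℂ p hp :=
    (Projectivization.mk_eq_mk_iff' ℂ _ _ he hp).mpr
      (Submodule.mem_span_singleton.mp (Submodule.projection_apply_mem hpW q.rep))
  have hpE : ℂ ∙ p ≤ Module.End.eigenspace (toLin' (A : Matrix (Fin n) (Fin n) ℂ)) a :=
    (Submodule.span_singleton_le_iff_mem _ _).mpr (Module.End.mem_eigenspace_iff.mpr hAp)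
  exact hep ▸ tendsto_projAct_pow_mk ha _ he
    (Module.End.tendsto_inv_pow_smul_pow_apply_projection ha hpW hpE hW hWa q.rep)

end ProjectiveSpace

/-- Let `T ∈ GL(n+1,ℂ)` have characteristic polynomial
`∏ (X − α j)`, let `p ≠ 0` satisfy `T p = α 0 • p`, with `|α 0|` maximal among the
`|α j|` and `|α 0| ≠ |α j|` for all `j ≠ 0`.  Then `[p]` is an attracting fixed point
of `[[T]]` on `ℙⁿ`. -/
theorem stmt6 {n : ℕ} (T : GL (Fin (n + 1)) ℂ) (α : Fin (n + 1) → ℂ)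
    (hchar : (T : Matrix (Fin (n + 1)) (Fin (n + 1)) ℂ).charpoly = ∏ j, (X - C (α j)))
    (p : Fin (n + 1) → ℂ) (hp : p ≠ 0)
    (hTp : (T : Matrix (Fin (n + 1)) (Fin (n + 1)) ℂ).mulVec p = α 0 • p)
    (hmax : ∀ j, ‖α j‖ ≤ ‖α 0‖)
    (hne : ∀ j, j ≠ 0 → ‖α j‖ ≠ ‖α 0‖) :
    projAct T (Projectivization.mk ℂ p hp) = Projectivization.mk ℂ p hp ∧
    ∃ U : Set (Projectivization ℂ (Fin (n + 1) → ℂ)), IsOpen U ∧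
      Projectivization.mk ℂ p hp ∈ U ∧
      ∀ q ∈ U, Tendsto (fun m : ℕ => projAct (T ^ m) q) atTop
        (𝓝 (Projectivization.mk ℂ p hp)) := by
  set f : Module.End ℂ (Fin (n + 1) → ℂ) := toLin' (T : Matrix (Fin (n + 1)) (Fin (n + 1)) ℂ)
  have hfp : f.HasEigenvector (α 0) p := ⟨Module.End.mem_eigenspace_iff.mpr hTp, hp⟩
  have hα0 : α 0 ≠ 0 := fun h =>
    toLin'_apply_ne_zero T hp (by rw [hfp.apply_eq_smul, h, zero_smul])
  set g := ∏ j ∈ Finset.univ.erase (0 : Fin (n + 1)), (X - C (α j))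
  have hroots : ∀ μ, g.IsRoot μ → ‖μ‖ < ‖α 0‖ := fun μ =>
    norm_lt_of_isRoot_prod_X_sub_C fun j hj => (hmax j).lt_of_ne (hne j (Finset.ne_of_mem_erase hj))
  have hg : ¬ g.IsRoot (α 0) := fun h => (hroots _ h).false
  have hf : f.charpoly = (X - C (α 0)) * g := by
    rw [charpoly_toLin', hchar, Finset.mul_prod_erase _ (fun j => X - C (α j)) (Finset.mem_univ 0)]
  set W := LinearMap.ker (aeval f g)
  have hpW : IsCompl (ℂ ∙ p) W := Module.End.eigenspace_eq_span_singleton hf hg hfp ▸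
    Module.End.isCompl_eigenspace_ker_aeval hf hg
  refine ⟨?_, {x | ¬ x.submodule ≤ W}, isOpen_setOf_not_submodule_le W, ?_, fun q hq =>
    tendsto_projAct_pow_of_isCompl_span_singleton hα0 hp hfp.apply_eq_smul hpW
      (fun _ => Module.End.apply_mem_ker_aeval f g)
      (fun μ hμ => hroots μ (Module.End.isRoot_of_hasEigenvalue_restrict_ker_aeval hμ)) hq⟩
  · rw [projAct_mk_s6, Projectivization.mk_eq_mk_iff']
    exact ⟨α 0, hfp.apply_eq_smul.symm⟩
  · exact (Projectivization.submodule_mk_le_iff hp).not.mpr fun h =>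
      hp (Submodule.disjoint_def.mp hpW.disjoint p (Submodule.mem_span_singleton_self p) h)
end
end

section
/- Let k, l ≥ 1 and let T ∈ U(k,l). If T is diagonalizable and every eigenvalue of T has modulus 1, then T has an eigenvector v with ⟨v,v⟩_{k,l} ≤ 0. -/
open Matrix

noncomputable section

/-- The Hermitian form `⟨u,v⟩_{k,l} = −∑_{j<k} u_j conj(v_j) + ∑_{j≥k} u_j conj(v_j)`
of signature `(k,l)` on `ℂ^{k+l}` (indices `j < k` are the negative ones). -/
def hform (k l : ℕ) (u v : Fin (k + l) → ℂ) : ℂ :=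
  ∑ j : Fin (k + l),
    if (j : ℕ) < k then -(u j * starRingEnd ℂ (v j)) else u j * starRingEnd ℂ (v j)

/-!
Suppose every eigenvector `v` had `⟨v,v⟩ > 0`. Since `T` preserves the form and its
eigenvalues lie on the unit circle, `⟨u,v⟩ = μ conj(ν) ⟨u,v⟩` for eigenvectors `u, v` with
eigenvalues `μ ≠ ν`, and `μ conj(ν) ≠ 1`; so distinct eigenspaces are orthogonal. As `T` is
diagonalizable, every vector is a sum of eigenvectors with distinct eigenvalues, whence
`⟨x,x⟩ ≥ 0` for all `x`. This fails for the first basis vector, which has norm `-1` as `k ≥ 1`.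
-/

open Module End

namespace LinearMap

variable {M : Type*} [AddCommGroup M] [Module ℂ M] (B : M →ₗ[ℂ] M →ₗ⋆[ℂ] ℂ) {f : End ℂ M}

lemma apply_eq_zero_of_mem_eigenspace_of_ne (hB : ∀ u v, B (f u) (f v) = B u v) {μ ν : ℂ}
    (hν : ‖ν‖ = 1) (hμν : μ ≠ ν) {u v : M} (hu : u ∈ f.eigenspace μ)
    (hv : v ∈ f.eigenspace ν) : B u v = 0 := by
  rw [mem_eigenspace_iff] at hu hv
  have hνν : starRingEnd ℂ ν * ν = 1 := by
    rw [Complex.conj_mul', hν]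
    norm_num
  have hscale : B u v = (μ * starRingEnd ℂ ν) * B u v := by
    conv_lhs => rw [← hB, hu, hv]
    simp only [map_smul, smul_apply, map_smulₛₗ, smul_eq_mul]
    ring
  have hne : μ * starRingEnd ℂ ν ≠ 1 := fun h ↦ hμν <| by
    calc μ = μ * starRingEnd ℂ ν * ν := by rw [mul_assoc, hνν, mul_one]
      _ = ν := by rw [h, one_mul]
  have : (μ * starRingEnd ℂ ν - 1) * B u v = 0 := by linear_combination -hscale
  exact (mul_eq_zero.mp this).resolve_left (sub_ne_zero.mpr hne)

lemma apply_sum_sum_eq_sum_of_pairwise {ι : Type*} (s : Finset ι) (w : ι → M)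
    (horth : ∀ i ∈ s, ∀ j ∈ s, i ≠ j → B (w i) (w j) = 0) :
    B (∑ i ∈ s, w i) (∑ i ∈ s, w i) = ∑ i ∈ s, B (w i) (w i) := by
  simp only [map_sum, sum_apply]
  exact Finset.sum_congr rfl fun i hi ↦
    Finset.sum_eq_single_of_mem i hi fun j hj hji ↦ horth j hj i hi hji

lemma re_apply_self_nonneg_of_iSup_eigenspace_eq_top (hB : ∀ u v, B (f u) (f v) = B u v)
    (hunit : ∀ μ, f.HasEigenvalue μ → ‖μ‖ = 1) (htop : ⨆ μ, f.eigenspace μ = ⊤)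
    (hpos : ∀ μ, ∀ v ∈ f.eigenspace μ, 0 ≤ (B v v).re) (x : M) : 0 ≤ (B x x).re := by
  obtain ⟨w, hw, rfl⟩ := (Submodule.mem_iSup_iff_exists_finsupp _ x).mp (htop ▸ Submodule.mem_top)
  have hunit' : ∀ μ ∈ w.support, ‖μ‖ = 1 := fun μ hμ ↦
    hunit μ <| hasEigenvalue_of_hasEigenvector ⟨hw μ, Finsupp.mem_support_iff.mp hμ⟩
  rw [Finsupp.sum, apply_sum_sum_eq_sum_of_pairwise B _ _ fun μ _ ν hν hμν ↦
    apply_eq_zero_of_mem_eigenspace_of_ne B hB (hunit' ν hν) hμν (hw μ) (hw ν), Complex.re_sum]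
  exact Finset.sum_nonneg fun μ _ ↦ hpos μ _ (hw μ)

end LinearMap

def hformₛₗ (k l : ℕ) : (Fin (k + l) → ℂ) →ₗ[ℂ] (Fin (k + l) → ℂ) →ₗ⋆[ℂ] ℂ :=
  LinearMap.mk₂'ₛₗ _ _ (hform k l)
    (fun _ _ _ ↦ by
      simp only [hform, Pi.add_apply, ← Finset.sum_add_distrib]
      exact Finset.sum_congr rfl fun _ _ ↦ by split_ifs <;> ring)
    (fun _ _ _ ↦ by
      simp only [hform, Pi.smul_apply, smul_eq_mul, RingHom.id_apply, Finset.mul_sum]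
      exact Finset.sum_congr rfl fun _ _ ↦ by split_ifs <;> ring)
    (fun _ _ _ ↦ by
      simp only [hform, Pi.add_apply, map_add, ← Finset.sum_add_distrib]
      exact Finset.sum_congr rfl fun _ _ ↦ by split_ifs <;> ring)
    (fun _ _ _ ↦ by
      simp only [hform, Pi.smul_apply, smul_eq_mul, map_mul, Finset.mul_sum]
      exact Finset.sum_congr rfl fun _ _ ↦ by split_ifs <;> ring)

lemma hform_single_self_of_lt {k l : ℕ} {i : Fin (k + l)} (hi : (i : ℕ) < k) :
    hform k l (Pi.single i 1) (Pi.single i 1) = -1 := by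
  rw [hform, Finset.sum_eq_single i (fun j _ hj ↦ by simp [hj]) (by simp)]
  simp [hi]

lemma IsDiagonalizable.iSup_eigenspace_toLin'_eq_top {n : ℕ} {A : Matrix (Fin n) (Fin n) ℂ}
    (hA : IsDiagonalizable A) : ⨆ μ, eigenspace (toLin' A) μ = ⊤ := by
  obtain ⟨P, d, hPd⟩ := hA
  have hAP : A * P = P * diagonal d := by
    rw [← hPd, ← mul_assoc, ← mul_assoc, Units.mul_inv, one_mul]
  have hcol : ∀ i, (P : Matrix (Fin n) (Fin n) ℂ).col i ∈ eigenspace (toLin' A) (d i) := by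
    intro i
    rw [mem_eigenspace_iff, toLin'_apply, ← mulVec_single_one, mulVec_mulVec, hAP,
      ← mulVec_mulVec, diagonal_mulVec_single, ← smul_eq_mul, Pi.single_smul', mulVec_smul]
  have hexpand : ∀ x,
      x = ∑ i, ((P⁻¹ : GL (Fin n) ℂ) *ᵥ x) i • (P : Matrix (Fin n) (Fin n) ℂ).col i := by
    intro x
    calc x = (P : Matrix (Fin n) (Fin n) ℂ) *ᵥ ((P⁻¹ : GL (Fin n) ℂ) *ᵥ x) := by
          rw [mulVec_mulVec, Units.mul_inv, one_mulVec]
      _ = _ := by ext j; simp [mulVec, dotProduct, mul_comm]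
  refine eq_top_iff.mpr fun x _ ↦ hexpand x ▸ Submodule.sum_mem _ fun i _ ↦
    Submodule.smul_mem _ _ (Submodule.mem_iSup_of_mem (d i) (hcol i))

theorem stmt10_general (k l : ℕ) (hk : 1 ≤ k) (T : GL (Fin (k + l)) ℂ)
    (hU : ∀ u v : Fin (k + l) → ℂ,
      hform k l ((T : Matrix (Fin (k + l)) (Fin (k + l)) ℂ).mulVec u)
        ((T : Matrix (Fin (k + l)) (Fin (k + l)) ℂ).mulVec v) = hform k l u v)
    (hdiag : IsDiagonalizable (T : Matrix (Fin (k + l)) (Fin (k + l)) ℂ))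
    (huni : ∀ μ ∈ spectrum ℂ (T : Matrix (Fin (k + l)) (Fin (k + l)) ℂ), ‖μ‖ = 1) :
    ∃ v : Fin (k + l) → ℂ, v ≠ 0 ∧
      (∃ μ : ℂ, (T : Matrix (Fin (k + l)) (Fin (k + l)) ℂ).mulVec v = μ • v) ∧
      (hform k l v v).re ≤ 0 := by
  by_contra! hpos
  set f : End ℂ (Fin (k + l) → ℂ) := toLin' (T : Matrix (Fin (k + l)) (Fin (k + l)) ℂ)
  have hunit : ∀ μ, f.HasEigenvalue μ → ‖μ‖ = 1 := fun μ hμ ↦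
    huni μ (by rw [← spectrum_toLin']; exact hμ.mem_spectrum)
  have hnonneg : ∀ μ, ∀ v ∈ f.eigenspace μ, 0 ≤ (hformₛₗ k l v v).re := by
    intro μ v hv
    rcases eq_or_ne v 0 with rfl | hv0
    · simp
    · exact (hpos v hv0 ⟨μ, mem_eigenspace_iff.mp hv⟩).le
  have := (hformₛₗ k l).re_apply_self_nonneg_of_iSup_eigenspace_eq_top hU hunit
    hdiag.iSup_eigenspace_toLin'_eq_top hnonneg (Pi.single ⟨0, by omega⟩ 1)
  rw [hformₛₗ, LinearMap.mk₂'ₛₗ_apply, hform_single_self_of_lt hk] at this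
  norm_num at this

/-- If `T ∈ U(k,l)` is diagonalizable and every eigenvalue of `T`
has modulus 1, then `T` has an eigenvector `v` with `⟨v,v⟩_{k,l} ≤ 0` (the form takes
real values on the diagonal, so this is expressed via the real part). -/
theorem stmt10 (k l : ℕ) (hk : 1 ≤ k) (hl : 1 ≤ l) (T : GL (Fin (k + l)) ℂ)
    (hU : ∀ u v : Fin (k + l) → ℂ,
      hform k l ((T : Matrix (Fin (k + l)) (Fin (k + l)) ℂ).mulVec u)
        ((T : Matrix (Fin (k + l)) (Fin (k + l)) ℂ).mulVec v) = hform k l u v)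
    (hdiag : IsDiagonalizable (T : Matrix (Fin (k + l)) (Fin (k + l)) ℂ))
    (huni : ∀ μ ∈ spectrum ℂ (T : Matrix (Fin (k + l)) (Fin (k + l)) ℂ), ‖μ‖ = 1) :
    ∃ v : Fin (k + l) → ℂ, v ≠ 0 ∧
      (∃ μ : ℂ, (T : Matrix (Fin (k + l)) (Fin (k + l)) ℂ).mulVec v = μ • v) ∧
      (hform k l v v).re ≤ 0 :=
  stmt10_general k l hk T hU hdiag huni
end
end

section
/- Let k, l ≥ 1 and let T ∈ U(k,l). If T is diagonalizable and every eigenvalue of T has modulus 1, then T has an eigenvector v with ⟨v,v⟩_{k,l} ≠ 0. -/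
/-!
Choose an eigenbasis `b i` of `T`, with eigenvalues `d i`. The form is nondegenerate, so some
`⟨b i, b j⟩` is nonzero; since `T` preserves the form, this forces `d i * conj (d j) = 1`, hence
`d i = d j` because `|d j| = 1`. Thus every `b i + c • b j` is an eigenvector, and by polarization
one of them, with `c ∈ {±1, ±I}`, is not isotropic.
-/

open Matrix

noncomputable section

open ComplexConjugate

namespace LinearMap

variable {M : Type*} [AddCommGroup M] [Module ℂ M]

theorem sesq_polarization (B : M →ₗ[ℂ] M →ₗ⋆[ℂ] ℂ) (u w : M) :
    4 * B u w = B (u + w) (u + w) - B (u - w) (u - w)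
      + Complex.I * (B (u + Complex.I • w) (u + Complex.I • w)
        - B (u - Complex.I • w) (u - Complex.I • w)) := by
  simp only [map_add, map_sub, map_smulₛₗ, add_apply, sub_apply, smul_apply, smul_eq_mul,
    RingHom.id_apply, Complex.conj_I]
  ring_nf
  simp only [Complex.I_sq, mul_neg, mul_one, neg_mul, sub_neg_eq_add, add_neg_cancel_right]
  ring

theorem exists_apply_add_smul_self_ne_zero (B : M →ₗ[ℂ] M →ₗ⋆[ℂ] ℂ) {u w : M} (h : B u w ≠ 0) :
    ∃ c : ℂ, B (u + c • w) (u + c • w) ≠ 0 := by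
  by_contra! H
  have h₁ := H 1
  have h₂ := H (-1)
  have h₃ := H (-Complex.I)
  simp only [one_smul, neg_smul, ← sub_eq_add_neg] at h₁ h₂ h₃
  have := sesq_polarization B u w
  rw [h₁, h₂, h₃, H Complex.I] at this
  exact h (by simpa using this)

theorem eq_of_isometry_of_apply_ne_zero (B : M →ₗ[ℂ] M →ₗ⋆[ℂ] ℂ) {f : M → M}
    (hf : ∀ u v, B (f u) (f v) = B u v) {u w : M} {μ ν : ℂ} (hu : f u = μ • u) (hw : f w = ν • w)
    (hν : ‖ν‖ = 1) (huw : B u w ≠ 0) : μ = ν := by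
  have hμν : μ * conj ν = 1 := by
    have := hf u w
    rw [hu, hw, map_smulₛₗ, map_smulₛₗ, smul_apply, smul_eq_mul, smul_eq_mul, RingHom.id_apply,
      ← mul_assoc, mul_comm (conj ν)] at this
    exact mul_right_cancel₀ huw (this.trans (one_mul _).symm)
  have hνν : ν * conj ν = 1 := by
    rw [Complex.mul_conj, Complex.normSq_eq_norm_sq, hν]; norm_num
  exact mul_right_cancel₀ (right_ne_zero_of_mul_eq_one hνν) (hμν.trans hνν.symm)

end LinearMap

theorem IsDiagonalizable.exists_basis_eigenvectors {n : ℕ} {A : Matrix (Fin n) (Fin n) ℂ}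
    (h : IsDiagonalizable A) : ∃ (b : Module.Basis (Fin n) ℂ (Fin n → ℂ)) (d : Fin n → ℂ),
      ∀ i, A *ᵥ b i = d i • b i ∧ d i ∈ spectrum ℂ A := by
  obtain ⟨P, d, hPd⟩ := h
  have hAP : A * P = P * diagonal d := by
    rw [← hPd, ← mul_assoc, ← mul_assoc, Units.mul_inv, one_mul]
  refine ⟨(Pi.basisFun ℂ (Fin n)).map (Matrix.GeneralLinearGroup.toLin P).toLinearEquiv, d,
    fun i => ⟨?_, ?_⟩⟩
  · simp only [Module.Basis.map_apply, Pi.basisFun_apply]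
    change A *ᵥ (P *ᵥ Pi.single i 1) = d i • (P *ᵥ Pi.single i 1)
    rw [mulVec_mulVec, hAP, ← mulVec_mulVec, diagonal_mulVec_single, ← smul_eq_mul,
      Pi.single_smul, mulVec_smul]
  · rw [← spectrum.units_conjugate' (u := P), hPd, spectrum_diagonal]
    exact Set.mem_range_self i

def hformSesq (k l : ℕ) : (Fin (k + l) → ℂ) →ₗ[ℂ] (Fin (k + l) → ℂ) →ₗ⋆[ℂ] ℂ :=
  Matrix.toLinearMapₛₗ₂' ℂ (RingHom.id ℂ) (starRingEnd ℂ)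
    (diagonal fun j : Fin (k + l) => if (j : ℕ) < k then -1 else 1)

theorem hformSesq_apply (k l : ℕ) (u v : Fin (k + l) → ℂ) : hformSesq k l u v = hform k l u v := by
  simp [hformSesq, hform, Matrix.toLinearMapₛₗ₂'_apply, diagonal_apply]

theorem hformSesq_ne_zero {k l : ℕ} (h : 0 < k + l) : hformSesq k l ≠ 0 := by
  intro h₀
  have := Matrix.toLinearMapₛₗ₂'_single (R := ℂ) (RingHom.id ℂ) (starRingEnd ℂ)
    (diagonal fun j : Fin (k + l) => if (j : ℕ) < k then (-1 : ℂ) else 1) ⟨0, h⟩ ⟨0, h⟩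
  rw [← hformSesq, h₀] at this
  simp only [LinearMap.zero_apply, diagonal_apply_eq] at this
  split_ifs at this <;> norm_num at this

theorem stmt12_general (k l : ℕ) (hk : 1 ≤ k) (T : GL (Fin (k + l)) ℂ)
    (hU : ∀ u v : Fin (k + l) → ℂ,
      hform k l ((T : Matrix (Fin (k + l)) (Fin (k + l)) ℂ).mulVec u)
        ((T : Matrix (Fin (k + l)) (Fin (k + l)) ℂ).mulVec v) = hform k l u v)
    (hdiag : IsDiagonalizable (T : Matrix (Fin (k + l)) (Fin (k + l)) ℂ))
    (huni : ∀ μ ∈ spectrum ℂ (T : Matrix (Fin (k + l)) (Fin (k + l)) ℂ), ‖μ‖ = 1) :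
    ∃ v : Fin (k + l) → ℂ, v ≠ 0 ∧
      (∃ μ : ℂ, (T : Matrix (Fin (k + l)) (Fin (k + l)) ℂ).mulVec v = μ • v) ∧
      hform k l v v ≠ 0 := by
  obtain ⟨b, d, hbd⟩ := hdiag.exists_basis_eigenvectors
  obtain ⟨i, j, hij⟩ : ∃ i j, hformSesq k l (b i) (b j) ≠ 0 := by
    by_contra! h
    exact hformSesq_ne_zero (by omega) (LinearMap.ext_basis b b h)
  have hdij : d i = d j :=
    (hformSesq k l).eq_of_isometry_of_apply_ne_zero (by simpa only [hformSesq_apply] using hU)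
      (hbd i).1 (hbd j).1 (huni _ (hbd j).2) hij
  obtain ⟨c, hc⟩ := (hformSesq k l).exists_apply_add_smul_self_ne_zero hij
  refine ⟨b i + c • b j, fun h => hc (by simp [h]), ⟨d i, ?_⟩,
    hformSesq_apply k l _ _ ▸ hc⟩
  rw [mulVec_add, mulVec_smul, (hbd i).1, (hbd j).1, hdij, smul_add, smul_comm]

/-- If `T ∈ U(k,l)` is diagonalizable and every eigenvalue of `T`
has modulus 1, then `T` has an eigenvector `v` with `⟨v,v⟩_{k,l} ≠ 0`. -/
theorem stmt12 (k l : ℕ) (hk : 1 ≤ k) (hl : 1 ≤ l) (T : GL (Fin (k + l)) ℂ)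
    (hU : ∀ u v : Fin (k + l) → ℂ,
      hform k l ((T : Matrix (Fin (k + l)) (Fin (k + l)) ℂ).mulVec u)
        ((T : Matrix (Fin (k + l)) (Fin (k + l)) ℂ).mulVec v) = hform k l u v)
    (hdiag : IsDiagonalizable (T : Matrix (Fin (k + l)) (Fin (k + l)) ℂ))
    (huni : ∀ μ ∈ spectrum ℂ (T : Matrix (Fin (k + l)) (Fin (k + l)) ℂ), ‖μ‖ = 1) :
    ∃ v : Fin (k + l) → ℂ, v ≠ 0 ∧
      (∃ μ : ℂ, (T : Matrix (Fin (k + l)) (Fin (k + l)) ℂ).mulVec v = μ • v) ∧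
      hform k l v v ≠ 0 :=
  stmt12_general k l hk T hU hdiag huni
end
end

section
/- Let k, l ≥ 1 and let T ∈ U(k,l) be diagonalizable with every eigenvalue of modulus 1. Then there exists a basis v₁, …, v_{k+l} of ℂ^{k+l} consisting of eigenvectors of T such that ⟨v_j,v_j⟩_{k,l} < 0 for j = 1, …, k and ⟨v_j,v_j⟩_{k,l} > 0 for j = k+1, …, k+l. -/
open Matrix

noncomputable section

/-!
Write `T P = P D` with `D = diagonal d`. Since `T` preserves the form, eigenvectors `u, v` for
eigenvalues `λ, μ` satisfy `⟨u, v⟩ = λ conj μ ⟨u, v⟩`, and `λ conj μ ≠ 1` when `λ ≠ μ` because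
`|μ| = 1`. Hence the Gram matrix `Pᴴ J P` (`J = hformMatrix k l`) vanishes off the blocks of
equal eigenvalues, and diagonalizing each Hermitian block by a unitary matrix produces an
eigenbasis whose Gram matrix is real diagonal, with nonzero entries since `J` is nondegenerate.
By Sylvester's law of inertia exactly `k` of these entries are negative; reordering the basis
puts them first.
-/

namespace Matrix

variable {𝕜 n : Type*} [RCLike 𝕜] [Fintype n]

theorem star_mulVec_dotProduct_mulVec_mulVec (H M : Matrix n n 𝕜) (u v : n → 𝕜) :
    star (M *ᵥ v) ⬝ᵥ (H *ᵥ (M *ᵥ u)) = star v ⬝ᵥ ((Mᴴ * H * M) *ᵥ u) := by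
  simp only [star_mulVec, dotProduct_mulVec, vecMul_vecMul, mulVec_mulVec, Matrix.mul_assoc]

variable [DecidableEq n]

theorem IsHermitian.exists_unitary_diagonalization {A : Matrix n n 𝕜} (hA : A.IsHermitian) :
    ∃ U ∈ unitaryGroup n 𝕜, ∃ c : n → ℝ, star U * A * U = diagonal fun i => (c i : 𝕜) := by
  refine ⟨_, hA.eigenvectorUnitary.2, hA.eigenvalues, ?_⟩
  simpa [Unitary.conjStarAlgAut_apply, Function.comp_def] using
    hA.conjStarAlgAut_star_eigenvectorUnitary

theorem IsHermitian.exists_fiberwise_unitary_diagonalization {α : Type*} [Fintype α]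
    [DecidableEq α] (f : n → α) {G : Matrix n n 𝕜} (hG : G.IsHermitian)
    (hGf : ∀ a b, f a ≠ f b → G a b = 0) :
    ∃ U ∈ unitaryGroup n 𝕜, (∀ a b, f a ≠ f b → U a b = 0) ∧
      ∃ c : n → ℝ, star U * G * U = diagonal fun i => (c i : 𝕜) := by
  choose V hV c hc using fun y : α =>
    (hG.submatrix (Subtype.val : {x // f x = y} → n)).exists_unitary_diagonalization
  set e := Equiv.sigmaFiberEquiv f
  have hGblock : G = (blockDiagonal' fun y => G.submatrix (↑) (↑)).submatrix e.symm e.symm := by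
    ext a b
    by_cases hab : f a = f b
    · have hb : e.symm b = ⟨f a, ⟨b, hab.symm⟩⟩ := Sigma.subtype_ext hab.symm rfl
      have ha : e.symm a = ⟨f a, ⟨a, rfl⟩⟩ := rfl
      rw [submatrix_apply, ha, hb, blockDiagonal'_apply_eq, submatrix_apply]
    · simp [e, blockDiagonal'_apply, hab, hGf a b hab]
  refine ⟨(blockDiagonal' V).submatrix e.symm e.symm, ?_, fun a b hab => ?_,
    fun i => c (f i) ⟨i, rfl⟩, ?_⟩
  · rw [mem_unitaryGroup_iff', star_eq_conjTranspose, conjTranspose_submatrix,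
      blockDiagonal'_conjTranspose, submatrix_mul_equiv, ← blockDiagonal'_mul]
    simp_rw [← star_eq_conjTranspose, fun y => mem_unitaryGroup_iff'.mp (hV y)]
    rw [← Pi.one_def, blockDiagonal'_one, submatrix_one_equiv]
  · simp [e, blockDiagonal'_apply, hab]
  · conv_lhs => rw [hGblock]
    rw [star_eq_conjTranspose, conjTranspose_submatrix,
      blockDiagonal'_conjTranspose, submatrix_mul_equiv, submatrix_mul_equiv,
      ← blockDiagonal'_mul, ← blockDiagonal'_mul]
    simp_rw [← star_eq_conjTranspose, hc, blockDiagonal'_diagonal, submatrix_diagonal_equiv]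
    rfl

theorem mul_diagonal_eq_diagonal_mul {R : Matrix n n 𝕜} {d : n → 𝕜}
    (hR : ∀ a b, d a ≠ d b → R a b = 0) : R * diagonal d = diagonal d * R := by
  ext a b
  rw [mul_diagonal, diagonal_mul]
  by_cases hab : d a = d b
  · rw [hab, mul_comm]
  · simp [hR a b hab]

theorem apply_eq_zero_of_eq_star_diagonal_mul_mul_diagonal {G : Matrix n n 𝕜} {d : n → 𝕜}
    (hd : ∀ i, ‖d i‖ = 1) (hG : G = star (diagonal d) * G * diagonal d) {a b : n}
    (hab : d a ≠ d b) : G a b = 0 := by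
  have hGab : G a b = star (d a) * d b * G a b := by
    conv_lhs => rw [hG]
    simp only [star_eq_conjTranspose, diagonal_conjTranspose, mul_diagonal, diagonal_mul,
      Pi.star_apply, RCLike.star_def]
    ring
  have hunit : star (d a) * d b ≠ 1 := fun h => hab <| by
    calc d a = d a * (star (d a) * d b) := by rw [h, mul_one]
      _ = d b := by rw [← mul_assoc, RCLike.star_def, RCLike.mul_conj, hd a]; simp
  by_contra hne
  exact hunit (mul_right_cancel₀ hne (hGab.symm.trans (one_mul _).symm))

theorem exists_eigenbasis_diagonalizing_of_conjTranspose_mul_mul_eq_self {H A P : Matrix n n 𝕜}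
    {d : n → 𝕜} (hH : H.IsHermitian) (hA : Aᴴ * H * A = H) (hP : IsUnit P)
    (hAP : A * P = P * diagonal d) (hd : ∀ i, ‖d i‖ = 1) :
    ∃ (M : Matrix n n 𝕜) (c : n → ℝ), IsUnit M ∧ A * M = M * diagonal d ∧
      Mᴴ * H * M = diagonal fun i => (c i : 𝕜) := by
  set G := Pᴴ * H * P
  have hG : G = star (diagonal d) * G * diagonal d := by
    calc G = Pᴴ * (Aᴴ * H * A) * P := by rw [hA]
      _ = (A * P)ᴴ * H * (A * P) := by simp only [conjTranspose_mul, Matrix.mul_assoc]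
      _ = star (diagonal d) * G * diagonal d := by
          rw [hAP, conjTranspose_mul, star_eq_conjTranspose]; simp only [G, Matrix.mul_assoc]
  have hGh : G.IsHermitian := isHermitian_conjTranspose_mul_mul P hH
  obtain ⟨R, hR, hRd, c, hc⟩ :=
    hGh.exists_fiberwise_unitary_diagonalization (Set.rangeFactorization d) fun a b hab =>
      apply_eq_zero_of_eq_star_diagonal_mul_mul_diagonal hd hG fun h => hab (Subtype.ext h)
  refine ⟨P * R, c, hP.mul (Unitary.isUnit_coe (U := ⟨R, hR⟩)), ?_, ?_⟩
  · have hRD : R * diagonal d = diagonal d * R :=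
      mul_diagonal_eq_diagonal_mul fun a b hab => hRd a b fun h => hab (congrArg Subtype.val h)
    rw [← Matrix.mul_assoc, hAP, Matrix.mul_assoc, ← hRD, Matrix.mul_assoc]
  · rw [← hc, conjTranspose_mul, star_eq_conjTranspose]
    simp only [G, Matrix.mul_assoc]

theorem re_star_dotProduct_mulVec_mulVec {H M : Matrix n n 𝕜} {c : n → ℝ}
    (hc : Mᴴ * H * M = diagonal fun i => (c i : 𝕜)) (y : n → 𝕜) :
    RCLike.re (star (M *ᵥ y) ⬝ᵥ (H *ᵥ (M *ᵥ y))) = ∑ i, c i * ‖y i‖ ^ 2 := by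
  rw [star_mulVec_dotProduct_mulVec_mulVec, hc, dotProduct, map_sum]
  refine Finset.sum_congr rfl fun i _ => ?_
  rw [mulVec_diagonal, Pi.star_apply, mul_left_comm, RCLike.star_def, RCLike.conj_mul]
  norm_cast

theorem ncard_pos_add_ncard_nonpos_le {H M N : Matrix n n 𝕜} {c e : n → ℝ} (hM : IsUnit M)
    (hN : IsUnit N) (hc : Mᴴ * H * M = diagonal fun i => (c i : 𝕜))
    (he : Nᴴ * H * N = diagonal fun i => (e i : 𝕜)) :
    {i | 0 < c i}.ncard + {i | e i ≤ 0}.ncard ≤ Fintype.card n := by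
  have hMinj := mulVec_injective_iff_isUnit.2 hM
  have hNinj := mulVec_injective_iff_isUnit.2 hN
  have hdisj : Disjoint ((Pi.spanSubset 𝕜 {i | 0 < c i}).map M.mulVecLin)
      ((Pi.spanSubset 𝕜 {i | e i ≤ 0}).map N.mulVecLin) := by
    rw [Submodule.disjoint_def]
    rintro _ ⟨y, hy, rfl⟩ ⟨z, hz, hzy⟩
    rw [SetLike.mem_coe, Pi.mem_spanSubset_iff] at hy hz
    simp only [mulVecLin_apply] at hzy ⊢
    have hterm : ∀ i, 0 ≤ c i * ‖y i‖ ^ 2 := fun i => by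
      by_cases hi : 0 < c i
      · positivity
      · simp [hy i hi]
    have hsum : ∑ i, c i * ‖y i‖ ^ 2 ≤ 0 := by
      rw [← re_star_dotProduct_mulVec_mulVec hc, ← hzy, re_star_dotProduct_mulVec_mulVec he]
      refine Finset.sum_nonpos fun i _ => ?_
      by_cases hi : e i ≤ 0
      · exact mul_nonpos_of_nonpos_of_nonneg hi (by positivity)
      · simp [hz i hi]
    have hy0 : y = 0 := funext fun i => by
      by_cases hi : 0 < c i
      · have := (Finset.sum_eq_zero_iff_of_nonneg fun i _ => hterm i).1
          (le_antisymm hsum (Finset.sum_nonneg fun i _ => hterm i)) i (Finset.mem_univ i)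
        simpa [hi.ne'] using this
      · exact hy i hi
    rw [hy0, mulVec_zero]
  have := Submodule.finrank_add_finrank_le_of_disjoint hdisj
  rwa [LinearEquiv.finrank_eq (Submodule.equivMapOfInjective _ hMinj _).symm,
    LinearEquiv.finrank_eq (Submodule.equivMapOfInjective _ hNinj _).symm,
    Pi.dim_spanSubset, Pi.dim_spanSubset, Module.finrank_fintype_fun_eq_card] at this

theorem ncard_pos_eq_of_conjTranspose_mul_mul_eq_diagonal {H M N : Matrix n n 𝕜} {c e : n → ℝ}
    (hM : IsUnit M) (hN : IsUnit N) (hc : Mᴴ * H * M = diagonal fun i => (c i : 𝕜))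
    (he : Nᴴ * H * N = diagonal fun i => (e i : 𝕜)) :
    {i | 0 < c i}.ncard = {i | 0 < e i}.ncard := by
  have hsplit (w : n → ℝ) : {i | 0 < w i}.ncard + {i | w i ≤ 0}.ncard = Fintype.card n := by
    simpa [Set.compl_ofPred, not_lt, Nat.card_eq_fintype_card] using
      Set.ncard_add_ncard_compl {i | 0 < w i}
  have h₁ := ncard_pos_add_ncard_nonpos_le hM hN hc he
  have h₂ := ncard_pos_add_ncard_nonpos_le hN hM he hc
  have := hsplit c
  have := hsplit e
  omega

theorem ncard_neg_eq_of_conjTranspose_mul_mul_eq_diagonal {H M N : Matrix n n 𝕜} {c e : n → ℝ}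
    (hM : IsUnit M) (hN : IsUnit N) (hc : Mᴴ * H * M = diagonal fun i => (c i : 𝕜))
    (he : Nᴴ * H * N = diagonal fun i => (e i : 𝕜)) :
    {i | c i < 0}.ncard = {i | e i < 0}.ncard := by
  have hnegate {X : Matrix n n 𝕜} {w : n → ℝ} (hw : Xᴴ * H * X = diagonal fun i => (w i : 𝕜)) :
      Xᴴ * -H * X = diagonal fun i => ((-w i : ℝ) : 𝕜) := by
    simp [hw]
  simpa using ncard_pos_eq_of_conjTranspose_mul_mul_eq_diagonal hM hN (hnegate hc) (hnegate he)

theorem ne_zero_of_conjTranspose_mul_mul_eq_diagonal {H M : Matrix n n 𝕜} {c : n → ℝ}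
    (hH : IsUnit H) (hM : IsUnit M) (hc : Mᴴ * H * M = diagonal fun i => (c i : 𝕜)) (i : n) :
    c i ≠ 0 := by
  have hunit : IsUnit (diagonal fun i => (c i : 𝕜)) :=
    hc ▸ (((isUnit_conjTranspose M).2 hM).mul hH).mul hM
  simpa using (Pi.isUnit_iff.1 (isUnit_diagonal.1 hunit) i).ne_zero

theorem mulVec_col_of_mul_eq_mul_diagonal {A M : Matrix n n 𝕜} {d : n → 𝕜}
    (h : A * M = M * diagonal d) (j : n) : A *ᵥ M.col j = d j • M.col j := by
  rw [← mulVec_single_one, mulVec_mulVec, h]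
  ext i
  simp [mul_comm]

end Matrix

theorem Fin.exists_perm_iff_lt {k l : ℕ} (p : Fin (k + l) → Prop) (hp : {i | p i}.ncard = k) :
    ∃ σ : Equiv.Perm (Fin (k + l)), ∀ j, p (σ j) ↔ (j : ℕ) < k := by
  classical
  have hnp : {i | ¬ p i}.ncard = l := by
    have := Set.ncard_add_ncard_compl {i | p i}
    rw [Set.compl_ofPred, Nat.card_eq_fintype_card, Fintype.card_fin, hp] at this
    omega
  let e₁ : Fin k ≃ {i // p i} := (Finite.equivFinOfCardEq ((Nat.card_coe_set_eq _).trans hp)).symm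
  let e₂ : Fin l ≃ {i // ¬ p i} :=
    (Finite.equivFinOfCardEq ((Nat.card_coe_set_eq _).trans hnp)).symm
  refine ⟨finSumFinEquiv.symm.trans ((e₁.sumCongr e₂).trans (Equiv.sumCompl p)),
    Fin.addCases (fun i => ?_) (fun i => ?_)⟩
  · simpa using (e₁ i).2
  · simpa using (e₂ i).2

section HForm

variable {k l : ℕ}

def hformSign (k l : ℕ) (j : Fin (k + l)) : ℝ := if (j : ℕ) < k then -1 else 1

def hformMatrix (k l : ℕ) : Matrix (Fin (k + l)) (Fin (k + l)) ℂ :=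
  diagonal fun j => (hformSign k l j : ℂ)

theorem isHermitian_hformMatrix : (hformMatrix k l).IsHermitian := by
  simp [hformMatrix, IsHermitian, diagonal_conjTranspose]

theorem isUnit_hformMatrix : IsUnit (hformMatrix k l) := by
  refine isUnit_diagonal.2 (Pi.isUnit_iff.2 fun j => ?_)
  unfold hformSign
  split_ifs <;> simp

theorem ncard_hformSign_neg : {j | hformSign k l j < 0}.ncard = k := by
  have : {j | hformSign k l j < 0} = {j : Fin (k + l) | (j : ℕ) < k} := by
    ext j
    by_cases hj : (j : ℕ) < k <;> simp [hformSign, hj]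
  rw [this, Set.ncard_eq_toFinset_card', Set.toFinset_ofPred, Fin.card_filter_val_lt]
  omega

theorem hform_eq_star_dotProduct (u v : Fin (k + l) → ℂ) :
    hform k l u v = star v ⬝ᵥ (hformMatrix k l *ᵥ u) := by
  simp only [hform, hformMatrix, hformSign, dotProduct, mulVec_diagonal, Pi.star_apply,
    RCLike.star_def]
  refine Finset.sum_congr rfl fun j _ => ?_
  split_ifs <;> push_cast <;> ring

theorem hform_mulVec_mulVec (M : Matrix (Fin (k + l)) (Fin (k + l)) ℂ) (u v : Fin (k + l) → ℂ) :
    hform k l (M *ᵥ u) (M *ᵥ v) = star v ⬝ᵥ ((Mᴴ * hformMatrix k l * M) *ᵥ u) := by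
  rw [hform_eq_star_dotProduct, star_mulVec_dotProduct_mulVec_mulVec]

theorem hform_col_col (M : Matrix (Fin (k + l)) (Fin (k + l)) ℂ) (a b : Fin (k + l)) :
    hform k l (M.col a) (M.col b) = (Mᴴ * hformMatrix k l * M) b a := by
  rw [← mulVec_single_one, ← mulVec_single_one, hform_mulVec_mulVec]
  simp

theorem conjTranspose_mul_hformMatrix_mul_self {A : Matrix (Fin (k + l)) (Fin (k + l)) ℂ}
    (hA : ∀ u v, hform k l (A *ᵥ u) (A *ᵥ v) = hform k l u v) :
    Aᴴ * hformMatrix k l * A = hformMatrix k l := by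
  ext a b
  have hab := hA (Pi.single b 1) (Pi.single a 1)
  rw [hform_mulVec_mulVec, hform_eq_star_dotProduct] at hab
  simpa using hab

end HForm

theorem stmt13_general (k l : ℕ) (T : GL (Fin (k + l)) ℂ)
    (hU : ∀ u v : Fin (k + l) → ℂ,
      hform k l ((T : Matrix (Fin (k + l)) (Fin (k + l)) ℂ).mulVec u)
        ((T : Matrix (Fin (k + l)) (Fin (k + l)) ℂ).mulVec v) = hform k l u v)
    (hdiag : IsDiagonalizable (T : Matrix (Fin (k + l)) (Fin (k + l)) ℂ))
    (huni : ∀ μ ∈ spectrum ℂ (T : Matrix (Fin (k + l)) (Fin (k + l)) ℂ), ‖μ‖ = 1) :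
    ∃ b : Module.Basis (Fin (k + l)) ℂ (Fin (k + l) → ℂ),
      ∀ j : Fin (k + l),
        (∃ μ : ℂ, (T : Matrix (Fin (k + l)) (Fin (k + l)) ℂ).mulVec (b j) = μ • b j) ∧
        ((j : ℕ) < k → (hform k l (b j) (b j)).re < 0) ∧
        (k ≤ (j : ℕ) → 0 < (hform k l (b j) (b j)).re) := by
  classical
  obtain ⟨P, d, hPd⟩ := hdiag
  have hAP : T.1 * P = P * diagonal d := by
    rw [← hPd, ← Matrix.mul_assoc, ← Matrix.mul_assoc, P.mul_inv, Matrix.one_mul]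
  have hd : ∀ i, ‖d i‖ = 1 := fun i => huni _ <| by
    rw [← spectrum.units_conjugate' (u := P), hPd, spectrum_diagonal]
    exact ⟨i, rfl⟩
  obtain ⟨M, c, hM, hTM, hc⟩ :=
    exists_eigenbasis_diagonalizing_of_conjTranspose_mul_mul_eq_self isHermitian_hformMatrix
      (conjTranspose_mul_hformMatrix_mul_self hU) P.isUnit hAP hd
  have hneg : {i | c i < 0}.ncard = k := by
    rw [ncard_neg_eq_of_conjTranspose_mul_mul_eq_diagonal (e := hformSign k l) hM isUnit_one hc
      (by simp [hformMatrix]), ncard_hformSign_neg]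
  obtain ⟨σ, hσ⟩ := Fin.exists_perm_iff_lt (fun i => c i < 0) hneg
  have hform_col (i) : (hform k l (M.col i) (M.col i)).re = c i := by
    simp [hform_col_col, hc]
  refine ⟨(basisOfPiSpaceOfLinearIndependent (linearIndependent_cols_iff_isUnit.2 hM)).reindex
    σ.symm, fun j => ?_⟩
  simp only [Module.Basis.reindex_apply, Equiv.symm_symm, coe_basisOfPiSpaceOfLinearIndependent,
    hform_col]
  refine ⟨⟨d (σ j), mulVec_col_of_mul_eq_mul_diagonal hTM (σ j)⟩, (hσ j).2, fun hj => ?_⟩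
  exact (ne_zero_of_conjTranspose_mul_mul_eq_diagonal isUnit_hformMatrix hM hc (σ j)).lt_or_gt
    |>.resolve_left fun h => (not_lt.2 hj) ((hσ j).1 h)

/-- If `T ∈ U(k,l)` is diagonalizable with all eigenvalues of
modulus 1, there is a basis `v₁,…,v_{k+l}` of `ℂ^{k+l}` consisting of eigenvectors of
`T` with `⟨v_j,v_j⟩ < 0` for `j ≤ k` and `⟨v_j,v_j⟩ > 0` for `j > k` (the form is real
on the diagonal, so the signs are expressed via the real part). -/
theorem stmt13 (k l : ℕ) (hk : 1 ≤ k) (hl : 1 ≤ l) (T : GL (Fin (k + l)) ℂ)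
    (hU : ∀ u v : Fin (k + l) → ℂ,
      hform k l ((T : Matrix (Fin (k + l)) (Fin (k + l)) ℂ).mulVec u)
        ((T : Matrix (Fin (k + l)) (Fin (k + l)) ℂ).mulVec v) = hform k l u v)
    (hdiag : IsDiagonalizable (T : Matrix (Fin (k + l)) (Fin (k + l)) ℂ))
    (huni : ∀ μ ∈ spectrum ℂ (T : Matrix (Fin (k + l)) (Fin (k + l)) ℂ), ‖μ‖ = 1) :
    ∃ b : Module.Basis (Fin (k + l)) ℂ (Fin (k + l) → ℂ),
      ∀ j : Fin (k + l),
        (∃ μ : ℂ, (T : Matrix (Fin (k + l)) (Fin (k + l)) ℂ).mulVec (b j) = μ • b j) ∧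
        ((j : ℕ) < k → (hform k l (b j) (b j)).re < 0) ∧
        (k ≤ (j : ℕ) → 0 < (hform k l (b j) (b j)).re) :=
  stmt13_general k l T hU hdiag huni
end
end

section
/- Let n ≥ 4 and let A ∈ GL(n+1,ℂ) be the block-diagonal matrix consisting of two 2×2 upper-triangular Jordan blocks with eigenvalue 1 followed by the (n−3)×(n−3) identity matrix. Then there exist no λ ∈ ℂ \ {0} and no g ∈ GL(n+1,ℂ) such that g (λA) g⁻¹ ∈ U(1,n). In particular, the projective transformation of ℙⁿ induced by A is not conjugate in PGL(n+1,ℂ) to any element of PU(1,n). -/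
open Matrix

noncomputable section

/-- The Hermitian form `⟨u,v⟩_{1,n} = −u₁ conj(v₁) + ∑_{j≥2} u_j conj(v_j)` on `ℂ^{n+1}`. -/
def hform1n (n : ℕ) (u v : Fin (n + 1) → ℂ) : ℂ :=
  -(u 0 * starRingEnd ℂ (v 0)) + ∑ j : Fin n, u j.succ * starRingEnd ℂ (v j.succ)

/-- The block-diagonal matrix made of two `2×2` Jordan blocks `[[1,1],[0,1]]` followed
by the identity matrix: entry `(i,j)` is 1 if `i = j` or `(i,j) ∈ {(0,1),(2,3)}`,
and 0 otherwise. -/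
def twoJordanBlocks (n : ℕ) : Matrix (Fin (n + 1)) (Fin (n + 1)) ℂ :=
  Matrix.of fun i j => if j = i then 1
    else if ((i : ℕ) = 0 ∧ (j : ℕ) = 1) ∨ ((i : ℕ) = 2 ∧ (j : ℕ) = 3) then 1 else 0

/-! Pull the form back by `g` to `Q x y = ⟨g x, g y⟩_{1,n}`; the hypothesis says
`|c|² Q(A x, A y) = Q(x, y)`. For a Jordan chain `A u = u`, `A w = u + w` and a fixed vector
`v` of `A`, comparing `Q(v, u)` with `Q(v, w)` forces `Q(v, u) = 0`, whether or not `|c| = 1`.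
The two Jordan blocks give the chains `e₀, e₁` and `e₂, e₃`, so `g e₀` and `g e₂` span a totally
isotropic plane, which a form of signature `(1, n)` does not have. -/

theorem eq_zero_of_jordanChain {K V : Type*} [Field K] [Add V] (Q : V → V → K)
    (hQ_add : ∀ x y z, Q x (y + z) = Q x y + Q x z) (A : V → V) (r : K)
    (hQ : ∀ x y, r * Q (A x) (A y) = Q x y) {u w v : V}
    (hu : A u = u) (hw : A w = u + w) (hv : A v = v) : Q v u = 0 := by
  have hvu : r * Q v u = Q v u := by simpa [hu, hv] using hQ v u
  have hvw : r * (Q v u + Q v w) = Q v w := by simpa [hw, hv, hQ_add] using hQ v w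
  by_cases hr : r = 1
  · subst hr
    linear_combination hvw
  · have : (r - 1) * Q v u = 0 := by linear_combination hvu
    exact (mul_eq_zero.1 this).resolve_left (sub_ne_zero.2 hr)

theorem linearIndependent_mulVec_single_pair {m K : Type*} [Field K] [Fintype m] [DecidableEq m]
    {G : Matrix m m K} (hG : IsUnit G) {i j : m} (hij : i ≠ j) :
    LinearIndependent K ![G *ᵥ Pi.single i 1, G *ᵥ Pi.single j 1] := by
  rw [LinearIndependent.pair_iff]
  intro s t hst
  rw [← mulVec_smul, ← mulVec_smul, ← mulVec_add, ← mulVec_zero G] at hst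
  have hcomb := mulVec_injective_of_isUnit hG hst
  have hi := congrFun hcomb i
  have hj := congrFun hcomb j
  simp [hij, hij.symm] at hi hj
  exact ⟨hi, hj⟩

section HermitianForm

variable {n : ℕ}

theorem hform1n_add_right (u v v' : Fin (n + 1) → ℂ) :
    hform1n n u (v + v') = hform1n n u v + hform1n n u v' := by
  simp only [hform1n, Pi.add_apply, map_add, mul_add, Finset.sum_add_distrib]
  ring

theorem hform1n_sub_left (u u' v : Fin (n + 1) → ℂ) :
    hform1n n (u - u') v = hform1n n u v - hform1n n u' v := by
  simp only [hform1n, Pi.sub_apply, sub_mul, Finset.sum_sub_distrib]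
  ring

theorem hform1n_sub_right (u v v' : Fin (n + 1) → ℂ) :
    hform1n n u (v - v') = hform1n n u v - hform1n n u v' := by
  simp only [hform1n, Pi.sub_apply, map_sub, mul_sub, Finset.sum_sub_distrib]
  ring

theorem hform1n_smul_left (s : ℂ) (u v : Fin (n + 1) → ℂ) :
    hform1n n (s • u) v = s * hform1n n u v := by
  simp only [hform1n, Pi.smul_apply, smul_eq_mul, mul_add, Finset.mul_sum]
  ring_nf

theorem hform1n_smul_right (s : ℂ) (u v : Fin (n + 1) → ℂ) :
    hform1n n u (s • v) = starRingEnd ℂ s * hform1n n u v := by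
  simp only [hform1n, Pi.smul_apply, smul_eq_mul, map_mul, mul_add, Finset.mul_sum]
  ring_nf

theorem eq_zero_of_hform1n_self_eq_zero {w : Fin (n + 1) → ℂ} (h0 : w 0 = 0)
    (hw : hform1n n w w = 0) : w = 0 := by
  have hsum : ∑ j : Fin n, ((Complex.normSq (w j.succ) : ℝ) : ℂ) = 0 := by
    simpa [hform1n, h0, Complex.mul_conj] using hw
  have hsum' : ∑ j : Fin n, Complex.normSq (w j.succ) = 0 := by exact_mod_cast hsum
  have hz := (Finset.sum_eq_zero_iff_of_nonneg fun j _ => Complex.normSq_nonneg _).1 hsum'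
  funext i
  rcases Fin.eq_zero_or_eq_succ i with rfl | ⟨j, rfl⟩
  · exact h0
  · exact Complex.normSq_eq_zero.1 (hz j (Finset.mem_univ j))

/-- A form of signature `(1, n)` has no totally isotropic plane. -/
theorem not_linearIndependent_of_isotropic {p q : Fin (n + 1) → ℂ}
    (hpp : hform1n n p p = 0) (hpq : hform1n n p q = 0) (hqp : hform1n n q p = 0)
    (hqq : hform1n n q q = 0) : ¬ LinearIndependent ℂ ![p, q] := by
  intro hli
  -- `z` kills the first coordinate and stays isotropic, hence vanishes.
  set z := q 0 • p - p 0 • q with hz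
  have hz0 : z 0 = 0 := by simp only [hz, Pi.sub_apply, Pi.smul_apply, smul_eq_mul]; ring
  have hzz : hform1n n z z = 0 := by
    simp only [hz, hform1n_sub_left, hform1n_sub_right, hform1n_smul_left, hform1n_smul_right,
      hpp, hpq, hqp, hqq]
    ring
  have hcomb : q 0 • p + -p 0 • q = 0 := by
    rw [neg_smul, ← sub_eq_add_neg]
    exact eq_zero_of_hform1n_self_eq_zero hz0 hzz
  obtain ⟨-, hp0⟩ := LinearIndependent.pair_iff.1 hli _ _ hcomb
  have hp : p = 0 := eq_zero_of_hform1n_self_eq_zero (neg_eq_zero.1 hp0) hpp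
  exact hli.ne_zero 0 (by simpa using hp)

theorem hform1n_mulVec_conj {A G G' : Matrix (Fin (n + 1)) (Fin (n + 1)) ℂ} {c : ℂ}
    (hG : G' * G = 1)
    (hg : ∀ u v, hform1n n ((G * (c • A) * G') *ᵥ u) ((G * (c • A) * G') *ᵥ v) = hform1n n u v)
    (x y : Fin (n + 1) → ℂ) :
    c * starRingEnd ℂ c * hform1n n (G *ᵥ (A *ᵥ x)) (G *ᵥ (A *ᵥ y)) =
      hform1n n (G *ᵥ x) (G *ᵥ y) := by
  have hconj : ∀ z, (G * (c • A) * G') *ᵥ (G *ᵥ z) = c • (G *ᵥ (A *ᵥ z)) := fun z => by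
    rw [mulVec_mulVec, mul_assoc, hG, mul_one, ← mulVec_mulVec, smul_mulVec, mulVec_smul]
  rw [← hg (G *ᵥ x), hconj, hconj, hform1n_smul_left, hform1n_smul_right, mul_assoc]

end HermitianForm

section JordanBlocks

variable {n : ℕ}

theorem twoJordanBlocks_mulVec_single_zero :
    twoJordanBlocks n *ᵥ Pi.single 0 1 = Pi.single 0 1 := by
  ext i
  simp [twoJordanBlocks, Pi.single_apply, eq_comm]

theorem twoJordanBlocks_mulVec_single_one (hn : 1 ≤ n) :
    twoJordanBlocks n *ᵥ Pi.single ⟨1, by omega⟩ 1 =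
      Pi.single 0 1 + Pi.single ⟨1, by omega⟩ 1 := by
  ext i
  simp only [mulVec_single_one, col_apply, twoJordanBlocks, of_apply, Pi.add_apply,
    Pi.single_apply, Fin.ext_iff, Fin.val_zero, and_true]
  split_ifs <;> first | omega | norm_num

theorem twoJordanBlocks_mulVec_single_two (hn : 2 ≤ n) :
    twoJordanBlocks n *ᵥ Pi.single ⟨2, by omega⟩ 1 = Pi.single ⟨2, by omega⟩ 1 := by
  ext i
  simp only [mulVec_single_one, col_apply, twoJordanBlocks, of_apply, Pi.single_apply,
    Fin.ext_iff]
  split_ifs <;> first | omega | norm_num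

theorem twoJordanBlocks_mulVec_single_three (hn : 3 ≤ n) :
    twoJordanBlocks n *ᵥ Pi.single ⟨3, by omega⟩ 1 =
      Pi.single ⟨2, by omega⟩ 1 + Pi.single ⟨3, by omega⟩ 1 := by
  ext i
  simp only [mulVec_single_one, col_apply, twoJordanBlocks, of_apply, Pi.add_apply,
    Pi.single_apply, Fin.ext_iff, and_true]
  split_ifs <;> first | omega | norm_num

end JordanBlocks

/-- For `n ≥ 4`, no nonzero scalar multiple of the matrix
`twoJordanBlocks n` is conjugate in `GL(n+1,ℂ)` to an element of `U(1,n)`; in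
particular the induced projective transformation of `ℙⁿ` is not conjugate in
`PGL(n+1,ℂ)` to an element of `PU(1,n)`. -/
theorem stmt16 (n : ℕ) (hn : 4 ≤ n) :
    ¬ ∃ c : ℂ, c ≠ 0 ∧ ∃ g : GL (Fin (n + 1)) ℂ,
      ∀ u v : Fin (n + 1) → ℂ,
        hform1n n
          (((↑g : Matrix (Fin (n + 1)) (Fin (n + 1)) ℂ) * (c • twoJordanBlocks n) *
            (↑(g⁻¹) : Matrix (Fin (n + 1)) (Fin (n + 1)) ℂ)).mulVec u)
          (((↑g : Matrix (Fin (n + 1)) (Fin (n + 1)) ℂ) * (c • twoJordanBlocks n) *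
            (↑(g⁻¹) : Matrix (Fin (n + 1)) (Fin (n + 1)) ℂ)).mulVec v) =
        hform1n n u v := by
  rintro ⟨c, -, g, hg⟩
  set G : Matrix (Fin (n + 1)) (Fin (n + 1)) ℂ := ↑g
  let Q x y := hform1n n (G *ᵥ x) (G *ᵥ y)
  have hQ_add : ∀ x y z, Q x (y + z) = Q x y + Q x z := fun x y z => by
    simp only [Q, mulVec_add, hform1n_add_right]
  have hQ := hform1n_mulVec_conj g.inv_mul hg
  have e0 := twoJordanBlocks_mulVec_single_zero (n := n)
  have e1 := twoJordanBlocks_mulVec_single_one (by omega : 1 ≤ n)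
  have e2 := twoJordanBlocks_mulVec_single_two (by omega : 2 ≤ n)
  have e3 := twoJordanBlocks_mulVec_single_three (by omega : 3 ≤ n)
  refine not_linearIndependent_of_isotropic
    (eq_zero_of_jordanChain Q hQ_add _ _ hQ e0 e1 e0)
    (eq_zero_of_jordanChain Q hQ_add _ _ hQ e2 e3 e0)
    (eq_zero_of_jordanChain Q hQ_add _ _ hQ e0 e1 e2)
    (eq_zero_of_jordanChain Q hQ_add _ _ hQ e2 e3 e2)
    (linearIndependent_mulVec_single_pair g.isUnit ?_)
  simp [Fin.ext_iff]
end
end
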